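/- arXiv:1112.6343 — 6 statements merged into one kernel-verified Lean document; each statement's English description precedes it below -/
import Mathlib

section
/- Let $\sigma$ be a full-rank density matrix on $\mathbb{C}^D$ and let $\{E_i\}_{i=1}^r$ be a POVM ($E_i \ge 0$, $\sum_i E_i = \mathbb{1}$). For any density matrix $\rho$, setting $p_i = \mathrm{Tr}[E_i\sigma]$ and $q_i = \mathrm{Tr}[E_i\rho]$ (assuming all $p_i > 0$), the classical chi-squared divergence satisfies $\sum_i \frac{(q_i - p_i)^2}{p_i} \le \mathrm{Tr}[(\rho-\sigma)\,\Omega_\sigma(\rho-\sigma)]$, where $\Omega_\sigma$ is the superoperator whose inverse acts as $\Omega_\sigma^{-1}(X) = (\sigma X + X\sigma)/2$. -/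
open ComplexOrder Matrix

lemma psd_trace_re_nonneg {n : Type*} [Fintype n] [DecidableEq n]
    {M : Matrix n n ℂ} (h : M.PosSemidef) : 0 ≤ M.trace.re := by
  rw [Matrix.trace, Complex.re_sum]
  refine Finset.sum_nonneg fun i _ => ?_
  have := h.re_dotProduct_nonneg (Pi.single i 1)
  simpa [Matrix.diag, dotProduct, Matrix.mulVec, Pi.single_apply, apply_ite] using this

lemma psd_trace_mul_re_nonneg {n : Type*} [Fintype n] [DecidableEq n]
    {M N : Matrix n n ℂ} (hM : M.PosSemidef) (hN : N.PosSemidef) :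
    0 ≤ (M * N).trace.re := by
  obtain ⟨B, hB⟩ : ∃ B : Matrix n n ℂ, M = Bᴴ * B := by
    open scoped MatrixOrder Matrix.Norms.L2Operator in
    exact CStarAlgebra.nonneg_iff_eq_star_mul_self.mp hM.nonneg
  rw [hB, Matrix.mul_assoc, Matrix.trace_mul_comm]
  exact psd_trace_re_nonneg ((hN.mul_mul_conjTranspose_same B))

/-- For a full-rank density matrix `σ`, any POVM `{E i}` and any density matrix
`ρ`, the classical chi-squared divergence of the induced outcome distributions
is bounded by the Bures chi-squared divergence
`Tr[(ρ-σ) Ω_σ(ρ-σ)]`, where `Y = Ω_σ(ρ-σ)` is characterized by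
`(σY + Yσ)/2 = ρ - σ`. -/
theorem chi_squared_le_bures (D r : ℕ)
    (σ ρ Y : Matrix (Fin D) (Fin D) ℂ)
    (hσ : σ.PosDef) (hσtr : σ.trace = 1)
    (hρ : ρ.PosSemidef) (hρtr : ρ.trace = 1)
    (E : Fin r → Matrix (Fin D) (Fin D) ℂ)
    (hE : ∀ i, (E i).PosSemidef) (hEsum : ∑ i, E i = 1)
    (hp : ∀ i, 0 < (E i * σ).trace.re)
    (hY : σ * Y + Y * σ = (2 : ℂ) • (ρ - σ)) :
    ∑ i, ((E i * ρ).trace.re - (E i * σ).trace.re) ^ 2 / (E i * σ).trace.re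
      ≤ ((ρ - σ) * Y).trace.re := by
  set Δ := ρ - σ with hΔdef
  have hΔh : Δᴴ = Δ := by
    rw [hΔdef, Matrix.conjTranspose_sub, hρ.1, hσ.1]
  set p : Fin r → ℝ := fun i => (E i * σ).trace.re with hpdef
  set q : Fin r → ℝ := fun i => (E i * ρ).trace.re with hqdef
  set a : Fin r → ℝ := fun i => (q i - p i) / p i with hadef
  set A : Matrix (Fin D) (Fin D) ℂ := ∑ i, ((a i : ℂ)) • E i with hAdef
  set B : Matrix (Fin D) (Fin D) ℂ := ∑ i, ((a i : ℂ) ^ 2) • E i with hBdef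
  set L : ℝ := ∑ i, (q i - p i) ^ 2 / p i with hLdef
  set H : Matrix (Fin D) (Fin D) ℂ := (2:ℂ)⁻¹ • (Y + Yᴴ) with hHdef
  have hpne : ∀ i, p i ≠ 0 := fun i => ne_of_gt (hp i)
  -- H is hermitian and satisfies the same Sylvester equation
  have hYadj : σ * Yᴴ + Yᴴ * σ = (2 : ℂ) • Δ := by
    have h2 := congrArg Matrix.conjTranspose hY
    simp only [Matrix.conjTranspose_add, Matrix.conjTranspose_mul, Matrix.conjTranspose_smul,
      hσ.1.eq, hΔh, star_ofNat] at h2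
    rw [add_comm] at h2
    exact h2
  have hH : σ * H + H * σ = (2 : ℂ) • Δ := by
    have e1 : σ * H + H * σ = (2:ℂ)⁻¹ • ((σ * Y + Y * σ) + (σ * Yᴴ + Yᴴ * σ)) := by
      simp only [hHdef, Matrix.mul_smul, Matrix.smul_mul, Matrix.mul_add, Matrix.add_mul,
        smul_add]
      module
    rw [e1, hY, hYadj]
    module
  have hHh : Hᴴ = H := by
    simp only [hHdef, Matrix.conjTranspose_smul, Matrix.conjTranspose_add,
      Matrix.conjTranspose_conjTranspose, star_inv₀, star_ofNat]
    rw [add_comm]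
  have hAh : Aᴴ = A := by
    simp only [hAdef, Matrix.conjTranspose_sum, Matrix.conjTranspose_smul]
    refine Finset.sum_congr rfl fun i _ => ?_
    rw [(hE i).1, Complex.star_def, Complex.conj_ofReal]
  -- L = Re Tr[Δ A]
  have hL1 : (Δ * A).trace.re = L := by
    have e : Δ * A = ∑ i, (a i : ℂ) • (Δ * E i) := by
      rw [hAdef, Finset.mul_sum]
      exact Finset.sum_congr rfl fun i _ => by rw [Matrix.mul_smul]
    rw [e, Matrix.trace_sum, Complex.re_sum, hLdef]
    refine Finset.sum_congr rfl fun i _ => ?_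
    rw [Matrix.trace_smul, smul_eq_mul, Complex.re_ofReal_mul, Matrix.trace_mul_comm]
    have e2 : (E i * Δ).trace.re = q i - p i := by
      rw [hΔdef, Matrix.mul_sub, Matrix.trace_sub, Complex.sub_re]
    rw [e2, hadef]
    field_simp [hpne i]
  -- Re Tr[σ B] = L
  have hL2 : (σ * B).trace.re = L := by
    have e : σ * B = ∑ i, ((a i : ℂ) ^ 2) • (σ * E i) := by
      rw [hBdef, Finset.mul_sum]
      exact Finset.sum_congr rfl fun i _ => by rw [Matrix.mul_smul]
    rw [e, Matrix.trace_sum, Complex.re_sum, hLdef]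
    refine Finset.sum_congr rfl fun i _ => ?_
    rw [Matrix.trace_smul, smul_eq_mul]
    have h2 : ((a i : ℂ) ^ 2) = ((a i ^ 2 : ℝ) : ℂ) := by push_cast; ring
    rw [h2, Complex.re_ofReal_mul, Matrix.trace_mul_comm, hadef]
    field_simp [hpne i]
    ring
  -- B - A * A is a sum of PSD matrices
  have e1 : ∑ i, (a i : ℂ) • (E i * A) = A * A := by
    calc ∑ i, (a i : ℂ) • (E i * A) = ∑ i, ((a i : ℂ) • E i) * A := by
          exact Finset.sum_congr rfl fun i _ => (smul_mul_assoc _ _ _).symm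
      _ = (∑ i, (a i : ℂ) • E i) * A := by rw [Finset.sum_mul]
      _ = A * A := by rw [← hAdef]
  have e2 : ∑ i, (a i : ℂ) • (A * E i) = A * A := by
    calc ∑ i, (a i : ℂ) • (A * E i) = ∑ i, A * ((a i : ℂ) • E i) := by
          exact Finset.sum_congr rfl fun i _ => (mul_smul_comm _ _ _).symm
      _ = A * ∑ i, (a i : ℂ) • E i := by rw [Finset.mul_sum]
      _ = A * A := by rw [← hAdef]
  have e3 : ∑ i, A * E i * A = A * A := by
    have h1 := Finset.sum_mul Finset.univ (fun i => A * E i) A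
    have h2 := Finset.mul_sum Finset.univ E A
    rw [← h1, ← h2, hEsum, Matrix.mul_one]
  have key : B - A * A = ∑ i, ((a i : ℂ) • 1 - A) * E i * ((a i : ℂ) • 1 - A)ᴴ := by
    have hterm : ∀ i, ((a i : ℂ) • 1 - A) * E i * ((a i : ℂ) • 1 - A)ᴴ
        = (a i : ℂ) ^ 2 • E i - (a i : ℂ) • (E i * A) - (a i : ℂ) • (A * E i)
          + A * E i * A := by
      intro i
      rw [Matrix.conjTranspose_sub, hAh, Matrix.conjTranspose_smul,
        Matrix.conjTranspose_one]
      have hs : star ((a i : ℂ)) = (a i : ℂ) := by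
        rw [Complex.star_def, Complex.conj_ofReal]
      rw [hs]
      simp only [Matrix.sub_mul, Matrix.mul_sub, Matrix.smul_mul, Matrix.mul_smul,
        Matrix.one_mul, Matrix.mul_one, smul_sub, smul_smul, ← pow_two]
      abel
    rw [Finset.sum_congr rfl fun i _ => hterm i]
    rw [Finset.sum_add_distrib, Finset.sum_sub_distrib, Finset.sum_sub_distrib, e1, e2, e3,
      ← hBdef]
    abel
  have hBA : 0 ≤ (σ * (B - A * A)).trace.re := by
    refine psd_trace_mul_re_nonneg hσ.posSemidef ?_
    rw [key]
    refine Finset.sum_induction _ _ (fun x y hx hy => hx.add hy) ?_ fun i _ => ?_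
    · exact Matrix.PosSemidef.zero
    · exact (hE i).mul_mul_conjTranspose_same _
  have hAAB : (σ * (A * A)).trace.re ≤ L := by
    rw [Matrix.mul_sub, Matrix.trace_sub, Complex.sub_re] at hBA
    linarith [hL2, hBA]
  -- 2L = Re Tr[σ H A] + Re Tr[σ A H]
  have h2L : (σ * (H * A)).trace.re + (σ * (A * H)).trace.re = 2 * L := by
    have e : (σ * (H * A)).trace + (σ * (A * H)).trace = ((2:ℂ) • Δ * A).trace := by
      rw [← hH, Matrix.add_mul, Matrix.trace_add]
      congr 1
      · rw [Matrix.mul_assoc]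
      · rw [Matrix.trace_mul_comm σ (A * H), Matrix.trace_mul_cycle H σ A, Matrix.mul_assoc]
    have e' : ((2:ℂ) • Δ * A).trace = (2:ℂ) * (Δ * A).trace := by
      rw [Matrix.smul_mul, Matrix.trace_smul, smul_eq_mul]
    have := congrArg Complex.re (e.trans e')
    rw [Complex.add_re] at this
    rw [this]
    have : ((2:ℂ) * (Δ * A).trace).re = 2 * (Δ * A).trace.re := by
      simp [Complex.mul_re]
    rw [this, hL1]
  -- Cauchy-Schwarz
  have hCS : (σ * (H * A)).trace.re + (σ * (A * H)).trace.re
      ≤ (σ * (H * H)).trace.re + (σ * (A * A)).trace.re := by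
    have hherm : (H - A)ᴴ = H - A := by rw [Matrix.conjTranspose_sub, hHh, hAh]
    have hpsd : ((H - A) * (H - A)).PosSemidef := by
      have h0 := Matrix.posSemidef_conjTranspose_mul_self (H - A)
      rwa [hherm] at h0
    have h0 := psd_trace_mul_re_nonneg hσ.posSemidef hpsd
    have expand : σ * ((H - A) * (H - A))
        = σ * (H * H) - σ * (H * A) - σ * (A * H) + σ * (A * A) := by
      simp only [Matrix.sub_mul, Matrix.mul_sub]
      abel
    rw [expand, Matrix.trace_add, Matrix.trace_sub, Matrix.trace_sub,
      Complex.add_re, Complex.sub_re, Complex.sub_re] at h0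
    linarith
  -- RHS identity
  have hRHS : (σ * (H * H)).trace.re = (Δ * Y).trace.re := by
    have c1 : (2:ℂ) * (σ * (H * H)).trace = (2:ℂ) * (Δ * H).trace := by
      calc (2:ℂ) * (σ * (H * H)).trace
          = (σ * (H * H)).trace + (H * (σ * H)).trace := by
            rw [Matrix.trace_mul_comm H (σ * H), Matrix.mul_assoc, two_mul]
        _ = ((σ * H + H * σ) * H).trace := by
            rw [Matrix.add_mul, Matrix.trace_add, Matrix.mul_assoc, Matrix.mul_assoc]
        _ = ((2:ℂ) • Δ * H).trace := by rw [hH]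
        _ = (2:ℂ) * (Δ * H).trace := by
            rw [Matrix.smul_mul, Matrix.trace_smul, smul_eq_mul]
    have c2 : (σ * (H * H)).trace = (Δ * H).trace := mul_left_cancel₀ two_ne_zero c1
    have c3 : (Δ * Yᴴ).trace = star ((Δ * Y).trace) := by
      have : Δ * Yᴴ = (Y * Δ)ᴴ := by rw [Matrix.conjTranspose_mul, hΔh]
      rw [this, Matrix.trace_conjTranspose, Matrix.trace_mul_comm]
    have c4 : Δ * H = (2:ℂ)⁻¹ • (Δ * Y + Δ * Yᴴ) := by
      rw [hHdef, Matrix.mul_smul, Matrix.mul_add]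
    rw [c2, c4, Matrix.trace_smul, Matrix.trace_add, c3, smul_eq_mul]
    have : ((2:ℂ)⁻¹) = (((2:ℝ)⁻¹ : ℝ) : ℂ) := by norm_num
    rw [this, Complex.re_ofReal_mul, Complex.add_re]
    have hst : (star ((Δ * Y).trace)).re = ((Δ * Y).trace).re := by
      simp [Complex.star_def]
    rw [hst]
    ring
  linarith [h2L, hCS, hAAB, hRHS]
end

section
/- Let $\sigma$ be a full-rank density matrix on $\mathbb{C}^D$ and $\rho$ any density matrix. Then the supremum over all POVMs $\{E_i\}$ of the classical chi-squared divergence $\sum_i (q_i-p_i)^2/p_i$ (with $p_i = \mathrm{Tr}[E_i\sigma]$, $q_i = \mathrm{Tr}[E_i\rho]$) is attained and equals the Bures divergence $\chi^2_B(\sigma,\rho) = \mathrm{Tr}[(\rho-\sigma)\Omega_\sigma(\rho-\sigma)]$; moreover it is attained by the projective von Neumann measurement in the eigenbasis of $\Omega_\sigma(\rho)$. -/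
open ComplexOrder

set_option linter.unusedVariables false
set_option linter.unusedSectionVars false

namespace ChiSq
open Matrix

variable {n : Type*} [Fintype n] [DecidableEq n]

lemma diag_nonneg_of_psd {A : Matrix n n ℂ} (hA : A.PosSemidef) (i : n) : 0 ≤ A i i := by
  have := hA.dotProduct_mulVec_nonneg (Pi.single i 1)
  simpa [dotProduct, mulVec, Pi.single_apply] using this

lemma trace_psd_nonneg {A : Matrix n n ℂ} (hA : A.PosSemidef) : 0 ≤ A.trace :=
  Finset.sum_nonneg fun i _ => diag_nonneg_of_psd hA i

lemma trace_mul_psd_nonneg {A B : Matrix n n ℂ} (hA : A.PosSemidef) (hB : B.PosSemidef) :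
    0 ≤ (A * B).trace := by
  obtain ⟨C, rfl⟩ : ∃ C : Matrix n n ℂ, B = Cᴴ * C := by
    open scoped MatrixOrder in exact CStarAlgebra.nonneg_iff_eq_star_mul_self.mp hB.nonneg
  rw [← Matrix.mul_assoc, Matrix.trace_mul_cycle]
  exact trace_psd_nonneg (hA.mul_mul_conjTranspose_same C)

lemma trace_mul_psd_nonneg_re {A B : Matrix n n ℂ} (hA : A.PosSemidef) (hB : B.PosSemidef) :
    0 ≤ ((A * B).trace).re := by
  simpa using (Complex.le_def.mp (trace_mul_psd_nonneg hA hB)).1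

lemma diag_quadform (A W : Matrix n n ℂ) (i : n) :
    (Wᴴ * (A * W)) i i = star (fun j => W j i) ⬝ᵥ (A *ᵥ (fun j => W j i)) := by
  simp only [Matrix.mul_apply, conjTranspose_apply, dotProduct, mulVec, Pi.star_apply,
    Finset.sum_mul, Finset.mul_sum]

lemma sylvester_zero {σ W : Matrix n n ℂ} (hσ : σ.PosDef) (h : σ * W + W * σ = 0) :
    W = 0 := by
  have h1 : (Wᴴ * (σ * W)).trace + (Wᴴ * (W * σ)).trace = 0 := by
    rw [← Matrix.trace_add, ← Matrix.mul_add, h, Matrix.mul_zero, Matrix.trace_zero]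
  have t1 : 0 ≤ (Wᴴ * (σ * W)).trace := by
    rw [← Matrix.mul_assoc]
    exact trace_psd_nonneg (hσ.posSemidef.conjTranspose_mul_mul_same W)
  have t2 : 0 ≤ (Wᴴ * (W * σ)).trace := by
    rw [← Matrix.mul_assoc]
    exact trace_mul_psd_nonneg (posSemidef_conjTranspose_mul_self W) hσ.posSemidef
  have t1z : (Wᴴ * (σ * W)).trace = 0 := le_antisymm (by
    have := add_le_add_left t2 ((Wᴴ * (σ * W)).trace)
    rw [zero_add] at this; rw [← h1]; simpa using this) t1
  have hdiag : ∀ i, (Wᴴ * (σ * W)) i i = 0 := by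
    have hnn : ∀ i ∈ Finset.univ, 0 ≤ (Wᴴ * (σ * W)) i i := fun i _ => by
      rw [← Matrix.mul_assoc]
      exact diag_nonneg_of_psd (hσ.posSemidef.conjTranspose_mul_mul_same W) i
    intro i
    have : ∑ i, (Wᴴ * (σ * W)) i i = 0 := t1z
    exact (Finset.sum_eq_zero_iff_of_nonneg hnn).mp this i (Finset.mem_univ i)
  ext i j
  by_contra hij
  have hcol : (fun k => W k j) ≠ 0 := by
    intro hc
    apply hij
    have := congrFun hc i
    simpa using this
  have hq : star (fun k => W k j) ⬝ᵥ (σ *ᵥ fun k => W k j) = 0 := by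
    rw [← diag_quadform]; exact hdiag j
  exact (hσ.dotProduct_mulVec_pos hcol).ne' hq

lemma trace_swap {E Z σ' : Matrix n n ℂ} (hE : E.IsHermitian) (hZ : Z.IsHermitian)
    (hσ : σ'.IsHermitian) : (Z*(E*σ')).trace = star ((E*(Z*σ')).trace) := by
  rw [← Matrix.trace_conjTranspose,
    show (E*(Z*σ'))ᴴ = σ' * (Z * E) by
      simp [Matrix.conjTranspose_mul, hE.eq, hZ.eq, hσ.eq, Matrix.mul_assoc],
    Matrix.trace_mul_cycle']

lemma cs_key {E Z σ' : Matrix n n ℂ} (hE : E.PosSemidef) (hσ : σ'.PosSemidef)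
    (hZ : Z.IsHermitian) :
    ((E * (Z * σ')).trace.re)^2 ≤ (E * (Z * (σ' * Z))).trace.re * (E * σ').trace.re := by
  set a := (E * (Z * (σ' * Z))).trace.re with ha
  set b := 2 * (E * (Z * σ')).trace.re with hb
  set c := (E * σ').trace.re with hc
  have hquad : ∀ t : ℝ, 0 ≤ a * (t*t) + b * t + c := by
    intro t
    have hS : ((1 : Matrix n n ℂ) + (t:ℂ)•Z).IsHermitian := by
      unfold Matrix.IsHermitian
      simp [conjTranspose_add, conjTranspose_smul, hZ.eq, Complex.conj_ofReal]
    have h0c : 0 ≤ (((1 + (t:ℂ)•Z) * E * ((1 + (t:ℂ)•Z) * σ')).trace) := by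
      have h1 := trace_mul_psd_nonneg (hE.conjTranspose_mul_mul_same (1 + (t:ℂ)•Z)) hσ
      rw [hS.eq] at h1
      rwa [Matrix.mul_assoc ((1 + (t:ℂ)•Z) * E)] at h1
    have hexp : (1 + (t:ℂ)•Z) * E * ((1 + (t:ℂ)•Z) * σ') =
        E*σ' + (t:ℂ)•(Z*(E*σ') + E*(Z*σ')) + ((t:ℂ)*(t:ℂ))•(Z*(E*(Z*σ'))) := by
      simp only [Matrix.add_mul, Matrix.mul_add, Matrix.one_mul, Matrix.mul_one,
        Matrix.smul_mul, Matrix.mul_smul, smul_smul, smul_add, Matrix.mul_assoc]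
      abel
    rw [hexp] at h0c
    have h0 : 0 ≤ (E*σ' + (t:ℂ)•(Z*(E*σ') + E*(Z*σ')) +
        ((t:ℂ)*(t:ℂ))•(Z*(E*(Z*σ')))).trace.re := by
      simpa using (Complex.le_def.mp h0c).1
    rw [Matrix.trace_add, Matrix.trace_add, Matrix.trace_smul, Matrix.trace_smul] at h0
    have hswap := trace_swap hE.isHermitian hZ hσ.isHermitian
    have hacoef : (Z*(E*(Z*σ'))).trace = (E * (Z * (σ' * Z))).trace := by
      rw [Matrix.trace_mul_comm, Matrix.mul_assoc, Matrix.mul_assoc]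
    have hre : ((Z*(E*σ')).trace + (E*(Z*σ')).trace).re = b := by
      rw [hswap, hb]
      simp [Complex.add_re]
      ring
    calc (0:ℝ) ≤ _ := h0
    _ = a * (t*t) + b * t + c := by
      rw [smul_eq_mul, smul_eq_mul, Complex.add_re, Complex.add_re]
      rw [show ((t:ℂ)*(t:ℂ)) * (Z*(E*(Z*σ'))).trace
            = ((t*t : ℝ) : ℂ) * (Z*(E*(Z*σ'))).trace by push_cast; ring]
      rw [Complex.re_ofReal_mul, Complex.re_ofReal_mul, hacoef]
      rw [Matrix.trace_add, hre]
      ring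
  have hd := discrim_le_zero hquad
  rw [discrim, hb] at hd
  nlinarith [hd]

lemma trace_vecMulVec_mul (u : n → ℂ) (M : Matrix n n ℂ) :
    (Matrix.vecMulVec u (star u) * M).trace = star u ⬝ᵥ (M *ᵥ u) := by
  simp only [Matrix.trace, Matrix.diag, Matrix.mul_apply, Matrix.vecMulVec_apply,
    dotProduct, mulVec, Pi.star_apply, Finset.mul_sum]
  rw [Finset.sum_comm]
  exact Finset.sum_congr rfl fun k _ => Finset.sum_congr rfl fun j _ => by ring

end ChiSq

open ChiSq Matrix

/-- The supremum over all POVMs of the classical chi-squared divergence of the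
induced distributions equals the Bures chi-squared divergence
`Tr[(ρ-σ) Ω_σ(ρ-σ)]` (with `Z = Ω_σ(ρ-σ)`), and it is attained by the
von Neumann measurement in the eigenbasis of `Y = Ω_σ(ρ)`. -/
theorem chi_squared_sup_eq_bures (D : ℕ)
    (σ ρ Y Z : Matrix (Fin D) (Fin D) ℂ)
    (hσ : σ.PosDef) (hσtr : σ.trace = 1)
    (hρ : ρ.PosSemidef) (hρtr : ρ.trace = 1)
    (hY : σ * Y + Y * σ = (2 : ℂ) • ρ)
    (hZ : σ * Z + Z * σ = (2 : ℂ) • (ρ - σ)) :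
    (∀ (r : ℕ) (E : Fin r → Matrix (Fin D) (Fin D) ℂ),
        (∀ i, (E i).PosSemidef) → (∑ i, E i = 1) →
        ∑ i, ((E i * ρ).trace.re - (E i * σ).trace.re) ^ 2 / (E i * σ).trace.re
          ≤ ((ρ - σ) * Z).trace.re) ∧
    ∃ ψ : Fin D → Fin D → ℂ,
      (∀ i j, dotProduct (star (ψ i)) (ψ j) = if i = j then 1 else 0) ∧
      (∀ i, ∃ μ : ℝ, Y.mulVec (ψ i) = (μ : ℂ) • ψ i) ∧
      ∑ i, ((Matrix.vecMulVec (ψ i) (star (ψ i)) * ρ).trace.re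
              - (Matrix.vecMulVec (ψ i) (star (ψ i)) * σ).trace.re) ^ 2
            / (Matrix.vecMulVec (ψ i) (star (ψ i)) * σ).trace.re
        = ((ρ - σ) * Z).trace.re := by
  classical
  have hσH : σ.IsHermitian := hσ.1
  have hρH : ρ.IsHermitian := hρ.1
  have hΔH : (ρ - σ).IsHermitian := hρH.sub hσH
  have hermOf : ∀ (M X : Matrix (Fin D) (Fin D) ℂ), M.IsHermitian →
      (σ * X + X * σ = (2:ℂ) • M) → X.IsHermitian := by
    intro M X hM hX
    have hconj : σ * Xᴴ + Xᴴ * σ = (2:ℂ) • M := by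
      have h := congrArg Matrix.conjTranspose hX
      simp only [Matrix.conjTranspose_add, Matrix.conjTranspose_mul, hσH.eq, hM.eq,
        Matrix.conjTranspose_smul, star_ofNat] at h
      rw [add_comm] at h
      exact h
    have h0 : σ * (X - Xᴴ) + (X - Xᴴ) * σ = 0 := by
      rw [Matrix.mul_sub, Matrix.sub_mul]
      have he : σ * X - σ * Xᴴ + (X * σ - Xᴴ * σ)
           = (σ * X + X * σ) - (σ * Xᴴ + Xᴴ * σ) := by abel
      rw [he, hX, hconj, sub_self]
    have hz := sylvester_zero hσ h0
    exact (sub_eq_zero.mp hz).symm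
  have hZH : Z.IsHermitian := hermOf _ _ hΔH hZ
  have hYH : Y.IsHermitian := hermOf _ _ hρH hY
  have hZY : Z = Y - 1 := by
    have hid : σ * (Y - 1 - Z) + (Y - 1 - Z) * σ
        = ((σ * Y + Y * σ) - (σ * Z + Z * σ)) - (σ + σ) := by
      rw [Matrix.mul_sub, Matrix.mul_sub, Matrix.sub_mul, Matrix.sub_mul,
        Matrix.mul_one, Matrix.one_mul]
      abel
    have h0 : σ * (Y - 1 - Z) + (Y - 1 - Z) * σ = 0 := by
      rw [hid, hY, hZ, smul_sub, two_smul ℂ σ]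
      abel
    have hz := sylvester_zero hσ h0
    exact (sub_eq_zero.mp hz).symm
  have hM_psd : (Z * (σ * Z)).PosSemidef := by
    have h := hσ.posSemidef.conjTranspose_mul_mul_same Z
    rwa [hZH.eq, Matrix.mul_assoc] at h
  -- Tr[E Δ].re = Tr[E Z σ].re for Hermitian E
  have hdre : ∀ E : Matrix (Fin D) (Fin D) ℂ, E.IsHermitian →
      (E * (ρ - σ)).trace.re = (E * (Z * σ)).trace.re := by
    intro E hE
    have h2 : (E * ((2:ℂ) • (ρ - σ))).trace = (E*(σ*Z)).trace + (E*(Z*σ)).trace := by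
      rw [← hZ, Matrix.mul_add, Matrix.trace_add]
    have hcyc : (E*(σ*Z)).trace = star ((E*(Z*σ)).trace) := by
      rw [← Matrix.mul_assoc, Matrix.trace_mul_comm]
      exact trace_swap hE hZH hσH
    rw [Matrix.mul_smul, Matrix.trace_smul, hcyc] at h2
    have h3 := congrArg Complex.re h2
    simp only [smul_eq_mul, Complex.add_re, Complex.mul_re, Complex.re_ofNat,
      Complex.im_ofNat, Complex.conj_re] at h3
    have hstar : (star ((E*(Z*σ)).trace)).re = ((E*(Z*σ)).trace).re := by
      exact Complex.conj_re _
    rw [hstar] at h3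
    linarith
  -- per-element bound
  have key : ∀ E : Matrix (Fin D) (Fin D) ℂ, E.PosSemidef →
      ((E * ρ).trace.re - (E * σ).trace.re)^2 / (E * σ).trace.re
        ≤ (E * (Z * (σ * Z))).trace.re := by
    intro E hE
    have hd : (E * ρ).trace.re - (E * σ).trace.re = (E * (Z * σ)).trace.re := by
      rw [← hdre E hE.isHermitian, Matrix.mul_sub, Matrix.trace_sub, Complex.sub_re]
    have hcs := cs_key hE hσ.posSemidef hZH
    have ha := trace_mul_psd_nonneg_re hE hM_psd
    have hc := trace_mul_psd_nonneg_re hE hσ.posSemidef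
    rw [hd]
    rcases eq_or_lt_of_le hc with h0 | h0
    · have hb2 : ((E * (Z * σ)).trace.re)^2 ≤ 0 := by
        rw [← h0] at hcs
        simpa using hcs
      have hb0 : (E * (Z * σ)).trace.re = 0 := by
        have := le_antisymm hb2 (sq_nonneg _)
        exact pow_eq_zero_iff two_ne_zero |>.mp this
      rw [hb0]
      simpa using ha
    · rw [div_le_iff₀ h0]
      exact hcs
  have hZtr : (Z * (σ * Z)).trace.re = ((ρ - σ) * Z).trace.re := by
    have h2 : (((2:ℂ) • (ρ - σ)) * Z).trace = (σ*Z*Z).trace + (Z*σ*Z).trace := by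
      rw [← hZ, Matrix.add_mul, Matrix.trace_add]
    have hc1 : (σ*Z*Z).trace = (Z*σ*Z).trace := by
      rw [Matrix.trace_mul_cycle]
    rw [hc1, Matrix.smul_mul, Matrix.trace_smul] at h2
    have h4 : (2:ℂ) • ((ρ - σ) * Z).trace = (2:ℂ) • (Z*σ*Z).trace := by
      rw [h2, two_smul]
    have h5 : ((ρ - σ) * Z).trace = (Z*σ*Z).trace :=
      smul_right_injective ℂ two_ne_zero h4
    rw [h5, Matrix.mul_assoc]
  have main2 : ∀ ψ : Fin D → Fin D → ℂ,
      (∀ i j, dotProduct (star (ψ i)) (ψ j) = if i = j then 1 else 0) →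
      (∀ i, ∃ ν : ℝ, Z *ᵥ ψ i = (ν:ℂ) • ψ i) →
      ∑ i, ((Matrix.vecMulVec (ψ i) (star (ψ i)) * ρ).trace.re
              - (Matrix.vecMulVec (ψ i) (star (ψ i)) * σ).trace.re) ^ 2
            / (Matrix.vecMulVec (ψ i) (star (ψ i)) * σ).trace.re
        = ((ρ - σ) * Z).trace.re := by
    intro ψ ortho hZva
    choose ν hZv using hZva
    set pv : Fin D → ℂ := fun i => star (ψ i) ⬝ᵥ (σ *ᵥ ψ i) with hpv
    have hψne : ∀ i, ψ i ≠ 0 := by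
      intro i h0
      have h := ortho i i
      rw [if_pos rfl, h0] at h
      simp at h
    have hppos : ∀ i, 0 < (pv i).re := by
      intro i
      have h := hσ.dotProduct_mulVec_pos (hψne i)
      simpa using (Complex.lt_def.mp h).1
    have hdot : ∀ i, star (ψ i) ⬝ᵥ ((ρ - σ) *ᵥ ψ i) = ((ν i : ℝ) : ℂ) * pv i := by
      intro i
      have h2 : (σ * Z + Z * σ) *ᵥ ψ i = (2:ℂ) • ((ρ - σ) *ᵥ ψ i) := by
        rw [hZ, Matrix.smul_mulVec]
      rw [Matrix.add_mulVec, ← Matrix.mulVec_mulVec, ← Matrix.mulVec_mulVec, hZv i,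
        Matrix.mulVec_smul] at h2
      have h3 := congrArg (fun v => star (ψ i) ⬝ᵥ v) h2
      simp only [dotProduct_add, dotProduct_smul, smul_eq_mul] at h3
      have h5 : star (ψ i) ᵥ* Z = ((ν i : ℝ):ℂ) • star (ψ i) := by
        have h6 : star (Z *ᵥ ψ i) = star (ψ i) ᵥ* Zᴴ := Matrix.star_mulVec Z (ψ i)
        rw [hZH.eq] at h6
        rw [← h6, hZv i, star_smul]
        simp [Complex.conj_ofReal]
      have h4 : star (ψ i) ⬝ᵥ (Z *ᵥ (σ *ᵥ ψ i)) = ((ν i : ℝ):ℂ) * pv i := by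
        rw [Matrix.dotProduct_mulVec, h5, smul_dotProduct, smul_eq_mul]
      rw [h4] at h3
      have h7 : (2:ℂ) * (star (ψ i) ⬝ᵥ ((ρ - σ) *ᵥ ψ i))
          = (2:ℂ) * (((ν i : ℝ):ℂ) * pv i) := by
        rw [← h3]; ring
      exact mul_left_cancel₀ two_ne_zero h7
    have hterm2 : ∀ i, (Matrix.vecMulVec (ψ i) (star (ψ i)) * ρ).trace.re
          - (Matrix.vecMulVec (ψ i) (star (ψ i)) * σ).trace.re = ν i * (pv i).re := by
      intro i
      rw [← Complex.sub_re, ← Matrix.trace_sub, ← Matrix.mul_sub, trace_vecMulVec_mul,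
        hdot i, Complex.re_ofReal_mul]
    have hterm3 : ∀ i, (Matrix.vecMulVec (ψ i) (star (ψ i)) * ((ρ - σ) * Z)).trace
          = ((ν i:ℝ):ℂ) * (((ν i:ℝ):ℂ) * pv i) := by
      intro i
      rw [trace_vecMulVec_mul, ← Matrix.mulVec_mulVec, hZv i, Matrix.mulVec_smul,
        dotProduct_smul, smul_eq_mul, hdot i]
    have hE1 : ∑ i, Matrix.vecMulVec (ψ i) (star (ψ i)) = 1 := by
      have h1 : (Matrix.of fun j i => ψ i j)ᴴ * (Matrix.of fun j i => ψ i j) = 1 := by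
        ext i j
        have h := ortho i j
        simp only [dotProduct, Pi.star_apply] at h
        simp only [Matrix.mul_apply, Matrix.conjTranspose_apply, Matrix.of_apply,
          Matrix.one_apply]
        exact h
      have h2 := mul_eq_one_comm.mp h1
      ext j k
      have h3 := congrFun (congrFun h2 j) k
      simp only [Matrix.mul_apply, Matrix.conjTranspose_apply, Matrix.of_apply] at h3
      simp only [Matrix.sum_apply, Matrix.vecMulVec_apply, Pi.star_apply]
      exact h3
    have hrhs : ((ρ - σ) * Z).trace.re = ∑ i, (ν i)^2 * (pv i).re := by
      rw [show ((ρ-σ)*Z).trace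
            = ∑ i, (Matrix.vecMulVec (ψ i) (star (ψ i)) * ((ρ-σ)*Z)).trace by
          rw [← Matrix.trace_sum, ← Finset.sum_mul, hE1, Matrix.one_mul]]
      rw [Complex.re_sum]
      refine Finset.sum_congr rfl fun i _ => ?_
      rw [hterm3 i, Complex.re_ofReal_mul, Complex.re_ofReal_mul]
      ring
    rw [hrhs]
    refine Finset.sum_congr rfl fun i _ => ?_
    rw [hterm2 i, trace_vecMulVec_mul]
    rw [div_eq_iff (hppos i).ne']
    ring
  constructor
  · intro r E hEp hEs
    have hsumle : ∑ i, ((E i * ρ).trace.re - (E i * σ).trace.re)^2 / (E i * σ).trace.re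
        ≤ ∑ i, (E i * (Z * (σ * Z))).trace.re :=
      Finset.sum_le_sum fun i _ => key (E i) (hEp i)
    have hsum2 : ∑ i, (E i * (Z * (σ * Z))).trace.re = (Z * (σ * Z)).trace.re := by
      rw [← Complex.re_sum, ← Matrix.trace_sum, ← Finset.sum_mul, hEs, Matrix.one_mul]
    calc ∑ i, ((E i * ρ).trace.re - (E i * σ).trace.re)^2 / (E i * σ).trace.re
        ≤ ∑ i, (E i * (Z * (σ * Z))).trace.re := hsumle
      _ = ((ρ - σ) * Z).trace.re := by rw [hsum2, hZtr]
  -- Part 2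
  · have horth0 : ∀ i j, dotProduct (star (⇑(hYH.eigenvectorBasis i)))
        (⇑(hYH.eigenvectorBasis j)) = if i = j then 1 else 0 := by
      intro i j
      have h := orthonormal_iff_ite.mp hYH.eigenvectorBasis.orthonormal i j
      rw [EuclideanSpace.inner_eq_star_dotProduct] at h
      rwa [dotProduct_comm] at h
    have heig0 : ∀ i, Y *ᵥ ⇑(hYH.eigenvectorBasis i)
        = ((hYH.eigenvalues i : ℝ) : ℂ) • ⇑(hYH.eigenvectorBasis i) := by
      intro i
      have h := hYH.mulVec_eigenvectorBasis i
      rw [h]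
      funext j
      simp [Complex.real_smul]
    have hZv0 : ∀ i, ∃ νr : ℝ, Z *ᵥ ⇑(hYH.eigenvectorBasis i)
        = (νr:ℂ) • ⇑(hYH.eigenvectorBasis i) := by
      intro i
      refine ⟨hYH.eigenvalues i - 1, ?_⟩
      rw [hZY, Matrix.sub_mulVec, heig0 i, Matrix.one_mulVec]
      funext j
      simp only [Pi.sub_apply, Pi.smul_apply, smul_eq_mul]
      push_cast
      ring
    exact ⟨fun i => ⇑(hYH.eigenvectorBasis i), horth0,
      fun i => ⟨hYH.eigenvalues i, heig0 i⟩, main2 _ horth0 hZv0⟩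
end

section
/- Let $\sigma$ be a density matrix and $\{E_i\}_{i=1}^r$ a POVM on $\mathbb{C}^D$. Define the $r\times r$ real matrix $L$ with entries $L_{ii} = \mathrm{Tr}[E_i(\mathbb{1} - E_i)\sigma]$ and $L_{ij} = -\mathrm{Tr}[E_i E_j \sigma]$ for $i \ne j$. Then $L$ is positive semidefinite. -/
open ComplexOrder

open Matrix in
lemma aux_trace_nonneg_of_posSemidef {n : ℕ} {M : Matrix (Fin n) (Fin n) ℂ}
    (hM : M.PosSemidef) : 0 ≤ M.trace := by
  rw [Matrix.trace]
  apply Finset.sum_nonneg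
  intro i _
  have := hM.dotProduct_mulVec_nonneg (Pi.single i 1)
  simpa [dotProduct, Matrix.mulVec, Pi.single_apply] using this

open Matrix in
lemma aux_trace_mul_nonneg_of_posSemidef {n : ℕ} {P Q : Matrix (Fin n) (Fin n) ℂ}
    (hP : P.PosSemidef) (hQ : Q.PosSemidef) : 0 ≤ (P * Q).trace := by
  obtain ⟨B, hB⟩ : ∃ B : Matrix (Fin n) (Fin n) ℂ, P = star B * B := by
    open scoped MatrixOrder in
    exact CStarAlgebra.nonneg_iff_eq_star_mul_self.mp hP.nonneg
  have h2 : (B * Q * Bᴴ).trace = (P * Q).trace := by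
    rw [Matrix.trace_mul_cycle, hB, Matrix.star_eq_conjTranspose]
  rw [← h2]
  have h3 := hQ.conjTranspose_mul_mul_same Bᴴ
  rw [Matrix.conjTranspose_conjTranspose] at h3
  exact aux_trace_nonneg_of_posSemidef h3

/-- The matrix `L` with `L_ii = Tr[E_i (1 - E_i) σ]` and
`L_ij = -Tr[E_i E_j σ]` (for `i ≠ j`), built from a POVM `{E i}` and a density
matrix `σ`, is positive semidefinite. -/
theorem povm_generator_posSemidef (D r : ℕ)
    (σ : Matrix (Fin D) (Fin D) ℂ) (hσ : σ.PosSemidef) (hσtr : σ.trace = 1)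
    (E : Fin r → Matrix (Fin D) (Fin D) ℂ)
    (hE : ∀ i, (E i).PosSemidef) (hEsum : ∑ i, E i = 1) :
    (Matrix.of fun i j : Fin r =>
        if i = j then (E i * (1 - E i) * σ).trace.re
        else -((E i * E j * σ).trace.re)).PosSemidef := by
  open Matrix in
  have key : ∀ i j : Fin r, (E j * E i * σ).trace = star ((E i * E j * σ).trace) := by
    intro i j
    rw [← Matrix.trace_conjTranspose, Matrix.conjTranspose_mul, Matrix.conjTranspose_mul,
        hσ.1, (hE i).1, (hE j).1, Matrix.trace_mul_comm]
  have keyre : ∀ i j : Fin r, (E i * E j * σ).trace.re = (E j * E i * σ).trace.re := by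
    intro i j
    rw [key i j]
    exact Complex.conj_re _
  -- uniform description of the entries
  have hentry : ∀ i j : Fin r,
      (Matrix.of fun i j : Fin r =>
        if i = j then (E i * (1 - E i) * σ).trace.re
        else -((E i * E j * σ).trace.re)) i j
      = (if i = j then (E i * σ).trace.re else 0) - (E i * E j * σ).trace.re := by
    intro i j
    by_cases h : i = j
    · subst h
      have h1 : E i * (1 - E i) * σ = E i * σ - E i * E i * σ := by
        rw [mul_sub, mul_one, Matrix.sub_mul]
      simp [h1, Complex.sub_re]
    · simp [h]
  refine Matrix.posSemidef_iff_dotProduct_mulVec.mpr ⟨?_, ?_⟩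
  · -- Hermitian
    ext i j
    simp only [Matrix.conjTranspose_apply, Matrix.of_apply, star_trivial]
    by_cases h : i = j
    · subst h; simp
    · simp [h, Ne.symm h, keyre]
  intro x
  set c : Fin r → ℂ := fun i => (x i : ℂ) with hc
  set F : Matrix (Fin D) (Fin D) ℂ := ∑ i, c i • E i with hF
  set A : Fin r → Matrix (Fin D) (Fin D) ℂ := fun i => c i • 1 - F with hA
  have hFH : Fᴴ = F := by
    open Matrix in
    rw [hF, Matrix.conjTranspose_sum]
    exact Finset.sum_congr rfl fun i _ => by
      rw [Matrix.conjTranspose_smul, (hE i).1, hc]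
      simp [Complex.conj_ofReal]
  have hAH : ∀ i, (A i)ᴴ = A i := by
    intro i
    open Matrix in
    rw [hA]
    simp [Matrix.conjTranspose_sub, Matrix.conjTranspose_smul, hFH, Complex.conj_ofReal,
      hc]
  have hzero : (0 : Matrix (Fin D) (Fin D) ℂ).PosSemidef :=
    ⟨Matrix.isHermitian_zero, fun y => by simp⟩
  have hT : (∑ i, A i * E i * A i).PosSemidef := by
    apply Finset.sum_induction _ _ (fun a b ha hb => ha.add hb) hzero
    intro i _
    have := (hE i).conjTranspose_mul_mul_same (A i)
    rwa [hAH i] at this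
  -- the algebraic identity
  have expand : ∀ i, A i * E i * A i
      = (c i * c i) • E i - c i • (E i * F) - c i • (F * E i) + F * E i * F := by
    intro i
    rw [hA]
    simp only [Matrix.sub_mul, Matrix.mul_sub, Matrix.smul_mul, Matrix.mul_smul,
      Matrix.one_mul, Matrix.mul_one, smul_smul]
    module
  have hTsum : ∑ i, A i * E i * A i = (∑ i, (c i * c i) • E i) - F * F := by
    rw [Finset.sum_congr rfl fun i _ => expand i]
    rw [Finset.sum_add_distrib, Finset.sum_sub_distrib, Finset.sum_sub_distrib]
    have h1 : ∑ i, c i • (E i * F) = F * F := by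
      rw [hF, Finset.sum_mul]
      exact Finset.sum_congr rfl fun i _ => by rw [Matrix.smul_mul]
    have h2 : ∑ i, c i • (F * E i) = F * F := by
      nth_rewrite 3 [hF]
      rw [Finset.mul_sum]
      exact Finset.sum_congr rfl fun i _ => by rw [Matrix.mul_smul]
    have h3 : ∑ i, F * E i * F = F * F := by
      have e1 : (∑ i, F * E i) * F = ∑ i, F * E i * F := Finset.sum_mul _ _ _
      have e2 : F * ∑ i, E i = ∑ i, F * E i := Finset.mul_sum _ _ _
      rw [← e1, ← e2, hEsum, mul_one]
    rw [h1, h2, h3]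
    abel
  -- trace identity
  have htr : ((∑ i, A i * E i * A i) * σ).trace
      = ∑ i, ∑ j, c i * c j *
          ((if i = j then (E i * σ).trace else 0) - (E i * E j * σ).trace) := by
    rw [hTsum, Matrix.sub_mul, Matrix.trace_sub]
    have hG : ((∑ i, (c i * c i) • E i) * σ).trace = ∑ i, c i * c i * (E i * σ).trace := by
      rw [Finset.sum_mul, Matrix.trace_sum]
      exact Finset.sum_congr rfl fun i _ => by
        rw [Matrix.smul_mul, Matrix.trace_smul, smul_eq_mul]
    have hFF : (F * F * σ).trace = ∑ i, ∑ j, c i * c j * (E i * E j * σ).trace := by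
      rw [hF, Finset.sum_mul, Finset.sum_mul, Matrix.trace_sum]
      refine Finset.sum_congr rfl fun i _ => ?_
      rw [Matrix.smul_mul, Matrix.smul_mul, Matrix.trace_smul, smul_eq_mul]
      have : E i * (∑ j, c j • E j) * σ = ∑ j, c j • (E i * E j * σ) := by
        rw [Finset.mul_sum, Finset.sum_mul]
        exact Finset.sum_congr rfl fun j _ => by
          rw [Matrix.mul_smul, Matrix.smul_mul]
      rw [this, Matrix.trace_sum, Finset.mul_sum]
      exact Finset.sum_congr rfl fun j _ => by
        rw [Matrix.trace_smul, smul_eq_mul]; ring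
    rw [hG, hFF]
    rw [← Finset.sum_sub_distrib]
    refine Finset.sum_congr rfl fun i _ => ?_
    have hsplit : ∑ j, c i * c j * ((if i = j then (E i * σ).trace else 0)
            - (E i * E j * σ).trace)
        = (∑ j, c i * c j * (if i = j then (E i * σ).trace else 0))
          - ∑ j, c i * c j * (E i * E j * σ).trace := by
      rw [← Finset.sum_sub_distrib]
      exact Finset.sum_congr rfl fun j _ => by ring
    rw [hsplit]
    congr 1
    simp [mul_ite, mul_zero]
  -- the quadratic form equals Re of the trace
  have hform : star x ⬝ᵥ ((Matrix.of fun i j : Fin r =>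
        if i = j then (E i * (1 - E i) * σ).trace.re
        else -((E i * E j * σ).trace.re)) *ᵥ x)
      = ((∑ i, A i * E i * A i) * σ).trace.re := by
    rw [htr, Complex.re_sum]
    rw [dotProduct, ]
    refine Finset.sum_congr rfl fun i _ => ?_
    rw [Complex.re_sum, Matrix.mulVec, dotProduct, Finset.mul_sum]
    refine Finset.sum_congr rfl fun j _ => ?_
    rw [hentry i j]
    have hcc : c i * c j = ((x i * x j : ℝ) : ℂ) := by rw [hc]; push_cast; ring
    rw [hcc, Complex.re_ofReal_mul, Complex.sub_re]
    have : (if i = j then (E i * σ).trace else 0).re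
        = (if i = j then (E i * σ).trace.re else 0) := by
      by_cases h : i = j <;> simp [h]
    rw [this]
    simp only [star_trivial]
    ring
  rw [hform]
  have := aux_trace_mul_nonneg_of_posSemidef hT hσ
  exact (Complex.le_def.mp this).1
end

section
/- Let $\lambda_1 \ge \lambda_2 \ge \cdots \ge \lambda_D > 0$ with $\sum_\alpha \lambda_\alpha = 1$. Let $P_s$ be the orthogonal projector onto the subspace of $\mathbb{R}^D$ orthogonal to the vector $v$ with components $v_\alpha = \sqrt{\lambda_\alpha/(1+\lambda_\alpha)}$, and let $M = P_s\, \mathrm{diag}(1/(1+\lambda_\alpha))\, P_s$. Then the smallest nonzero eigenvalue $\mu_2$ of $M$ satisfies $\frac{1}{1+\lambda_1} \le \mu_2 \le \frac{1}{1+\lambda_2}$. -/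
open Matrix in
private lemma sum_dotProduct_aux {n ι : Type*} [Fintype n] (s : Finset ι)
    (f : ι → n → ℝ) (w : n → ℝ) :
    (∑ i ∈ s, f i) ⬝ᵥ w = ∑ i ∈ s, f i ⬝ᵥ w := by
  simp only [dotProduct, Finset.sum_apply, Finset.sum_mul]
  exact Finset.sum_comm

open Matrix in
private lemma expand_aux {D : ℕ} (M : Matrix (Fin D) (Fin D) ℝ) (hM : M.IsHermitian)
    (y : Fin D → ℝ) :
    y = ∑ i, (⇑(hM.eigenvectorBasis i) ⬝ᵥ y) • ⇑(hM.eigenvectorBasis i) := by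
  set b := hM.eigenvectorBasis with hb
  let yE : EuclideanSpace ℝ (Fin D) := WithLp.toLp 2 y
  have h1 : ∑ i, b.repr yE i • b i = yE := b.sum_repr yE
  have h2 : ∀ i, b.repr yE i = ⇑(b i) ⬝ᵥ y := by
    intro i
    rw [b.repr_apply_apply yE i]
    simp only [PiLp.inner_apply, RCLike.inner_apply, conj_trivial, dotProduct]
    exact Finset.sum_congr rfl (fun x _ => mul_comm _ _)
  calc y = ⇑(∑ i, b.repr yE i • b i) := by rw [h1]
    _ = ∑ i, (⇑(b i) ⬝ᵥ y) • ⇑(b i) := by simp only [h2, WithLp.ofLp_sum, WithLp.ofLp_smul]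

open Matrix

set_option maxHeartbeats 1000000 in
/-- Interlacing bounds for the smallest nonzero eigenvalue of
`M = P_s diag(1/(1+λ)) P_s`, where `P_s` projects orthogonally to the vector
with components `√(λ_α/(1+λ_α))`. -/
theorem interlacing_bounds (D : ℕ) (hD : 2 ≤ D) (lam : Fin D → ℝ)
    (hmono : ∀ i j : Fin D, i ≤ j → lam j ≤ lam i)
    (hpos : ∀ a, 0 < lam a) (hsum : ∑ a, lam a = 1) :
    ∀ (v : Fin D → ℝ), (v = fun a => Real.sqrt (lam a / (1 + lam a))) →
    ∀ (P M : Matrix (Fin D) (Fin D) ℝ),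
      P = 1 - (∑ a, v a ^ 2)⁻¹ • Matrix.vecMulVec v v →
      M = P * Matrix.diagonal (fun a => 1 / (1 + lam a)) * P →
      (∀ (μ : ℝ) (x : Fin D → ℝ), x ≠ 0 → M.mulVec x = μ • x → μ ≠ 0 →
          1 / (1 + lam ⟨0, by omega⟩) ≤ μ) ∧
      (∃ (μ : ℝ) (x : Fin D → ℝ), x ≠ 0 ∧ M.mulVec x = μ • x ∧ μ ≠ 0 ∧
          μ ≤ 1 / (1 + lam ⟨1, by omega⟩)) := by
  intro v hv P M hP hM
  set i0 : Fin D := ⟨0, by omega⟩ with hi0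
  set i1 : Fin D := ⟨1, by omega⟩ with hi1
  have hne : i0 ≠ i1 := by simp [hi0, hi1, Fin.ext_iff]
  have h1 : ∀ a : Fin D, 0 < 1 + lam a := fun a => by have := hpos a; linarith
  have hv2 : ∀ a, v a ^ 2 = lam a / (1 + lam a) := by
    intro a; simp only [hv]
    exact Real.sq_sqrt (by have := hpos a; have := h1 a; positivity)
  have hvpos : ∀ a, 0 < v a := by
    intro a; simp only [hv]
    exact Real.sqrt_pos.mpr (by have := hpos a; have := h1 a; positivity)
  set d : Fin D → ℝ := fun a => 1 / (1 + lam a) with hd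
  have hd' : ∀ a, 1 / (1 + lam a) = d a := fun a => rfl
  simp only [hd']
  have hdpos : ∀ a, 0 < d a := fun a => by
    have := h1 a; simp only [hd]; positivity
  have hdmono : ∀ a b : Fin D, a ≤ b → d a ≤ d b := by
    intro a b hab
    have h2 := hmono a b hab
    have := h1 a; have := h1 b
    simp only [hd]
    apply one_div_le_one_div_of_le (h1 b)
    linarith
  set c : ℝ := ∑ a, v a ^ 2 with hc
  have hcpos : 0 < c := by
    rw [hc]
    refine Finset.sum_pos (fun a _ => ?_) ⟨i0, Finset.mem_univ _⟩
    have := hvpos a; positivity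
  have hvv : v ⬝ᵥ v = c := by
    simp only [dotProduct, hc, pow_two]
  -- basic facts about P
  have hPvec : ∀ z : Fin D → ℝ, P *ᵥ z = z - (c⁻¹ * (v ⬝ᵥ z)) • v := by
    intro z
    have hW : (Matrix.vecMulVec v v) *ᵥ z = (v ⬝ᵥ z) • v := by
      funext a
      simp only [Matrix.mulVec, Matrix.vecMulVec_apply, dotProduct,
        Pi.smul_apply, smul_eq_mul]
      rw [Finset.sum_mul]
      exact Finset.sum_congr rfl (fun b _ => by ring)
    rw [hP, Matrix.sub_mulVec, Matrix.one_mulVec, Matrix.smul_mulVec, hW,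
      smul_smul]
  have hvPz : ∀ z, v ⬝ᵥ (P *ᵥ z) = 0 := by
    intro z
    rw [hPvec, dotProduct_sub, dotProduct_smul, hvv, smul_eq_mul]
    field_simp
    ring
  have hPfix : ∀ z, v ⬝ᵥ z = 0 → P *ᵥ z = z := by
    intro z hz; rw [hPvec, hz]; simp
  have hPP : ∀ z, P *ᵥ (P *ᵥ z) = P *ᵥ z := fun z => hPfix _ (hvPz z)
  have hPsym : Pᵀ = P := by
    rw [hP]
    ext i j
    simp only [Matrix.transpose_apply, Matrix.sub_apply, Matrix.one_apply,
      Matrix.smul_apply, Matrix.vecMulVec_apply, smul_eq_mul]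
    rw [mul_comm (v j) (v i)]
    congr 1
    by_cases h : i = j <;> simp [h, eq_comm]
  have hsymdot : ∀ x w : Fin D → ℝ, x ⬝ᵥ (P *ᵥ w) = (P *ᵥ x) ⬝ᵥ w := by
    intro x w
    rw [Matrix.dotProduct_mulVec, ← Matrix.mulVec_transpose, hPsym]
  have hMvec : ∀ z, M *ᵥ z = P *ᵥ ((Matrix.diagonal d) *ᵥ (P *ᵥ z)) := by
    intro z
    rw [hM]
    simp only [Matrix.mulVec_mulVec, Matrix.mul_assoc]
  have hquad : ∀ z : Fin D → ℝ, z ⬝ᵥ (M *ᵥ z) = ∑ a, d a * (P *ᵥ z) a ^ 2 := by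
    intro z
    rw [hMvec, hsymdot]
    simp only [dotProduct, Matrix.mulVec_diagonal]
    exact Finset.sum_congr rfl (fun a _ => by ring)
  constructor
  · -- lower bound
    intro μ x hx hMx hμ
    have hPx : P *ᵥ x = x := by
      have h3 : P *ᵥ (M *ᵥ x) = M *ᵥ x := by rw [hMvec]; exact hPP _
      rw [hMx, Matrix.mulVec_smul] at h3
      exact smul_right_injective _ hμ h3
    have hSx : 0 < ∑ a, x a ^ 2 := by
      have hex : ∃ a, x a ≠ 0 := by
        by_contra hcon; push_neg at hcon; exact hx (funext hcon)
      obtain ⟨a0, ha0⟩ := hex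
      exact Finset.sum_pos' (fun a _ => sq_nonneg _)
        ⟨a0, Finset.mem_univ _, by positivity⟩
    have hQ1 : x ⬝ᵥ (M *ᵥ x) = μ * ∑ a, x a ^ 2 := by
      rw [hMx, dotProduct_smul, smul_eq_mul]
      congr 1
      simp only [dotProduct, pow_two]
    have hQ2 : x ⬝ᵥ (M *ᵥ x) = ∑ a, d a * x a ^ 2 := by rw [hquad, hPx]
    have hlow : d i0 * ∑ a, x a ^ 2 ≤ ∑ a, d a * x a ^ 2 := by
      rw [Finset.mul_sum]
      refine Finset.sum_le_sum (fun a _ => ?_)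
      have : d i0 ≤ d a := hdmono i0 a (by rw [Fin.le_def]; exact Nat.zero_le _)
      exact mul_le_mul_of_nonneg_right this (sq_nonneg _)
    have hfin : d i0 * ∑ a, x a ^ 2 ≤ μ * ∑ a, x a ^ 2 := by
      rw [← hQ1, hQ2]; exact hlow
    exact le_of_mul_le_mul_right hfin hSx
  · -- upper bound: proof by contradiction
    by_contra hcon
    push_neg at hcon
    -- symmetry of M
    have hMt : Mᵀ = M := by
      rw [hM, Matrix.transpose_mul, Matrix.transpose_mul, Matrix.diagonal_transpose,
        hPsym, Matrix.mul_assoc]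
    have hMH : M.IsHermitian := by
      ext i j
      rw [Matrix.conjTranspose_apply, star_trivial]
      exact congrFun (congrFun hMt i) j
    set b := hMH.eigenvectorBasis with hb
    set ev : Fin D → ℝ := hMH.eigenvalues with hev
    have heig : ∀ i, M *ᵥ ⇑(b i) = ev i • ⇑(b i) := fun i =>
      hMH.mulVec_eigenvectorBasis i
    have hune : ∀ i, (⇑(b i) : Fin D → ℝ) ≠ 0 := by
      intro i h
      exact b.orthonormal.ne_zero i (WithLp.ofLp_injective 2 h)
    -- the test vector
    set y : Fin D → ℝ := fun a =>
      v i1 * (if a = i0 then 1 else 0) - v i0 * (if a = i1 then 1 else 0) with hy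
    have hvy : v ⬝ᵥ y = 0 := by
      simp only [dotProduct, hy, mul_sub, mul_ite, mul_one, mul_zero,
        Finset.sum_sub_distrib, Finset.sum_ite_eq', Finset.mem_univ, if_true]
      ring
    have hysq : ∀ a, y a ^ 2 =
        v i1 ^ 2 * (if a = i0 then 1 else 0) + v i0 ^ 2 * (if a = i1 then 1 else 0) := by
      intro a
      by_cases h0 : a = i0
      · subst h0; simp [hy, hne]
      · by_cases h1 : a = i1
        · subst h1; simp [hy, h0]
        · simp [hy, h0, h1]
    have hSy : ∑ a, y a ^ 2 = v i1 ^ 2 + v i0 ^ 2 := by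
      simp only [hysq, mul_ite, mul_one, mul_zero, Finset.sum_add_distrib,
        Finset.sum_ite_eq', Finset.mem_univ, if_true]
    have hSypos : 0 < ∑ a, y a ^ 2 := by
      rw [hSy]; have := hvpos i0; have := hvpos i1; positivity
    have hQy : ∑ a, d a * y a ^ 2 = d i0 * v i1 ^ 2 + d i1 * v i0 ^ 2 := by
      simp only [hysq, mul_add, mul_ite, mul_one, mul_zero, Finset.sum_add_distrib,
        Finset.sum_ite_eq', Finset.mem_univ, if_true]
    -- coefficients of y in the eigenbasis
    set co : Fin D → ℝ := fun i => ⇑(b i) ⬝ᵥ y with hco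
    have hexp : y = ∑ i, co i • ⇑(b i) := by
      simp only [hco]
      exact expand_aux M hMH y
    -- two evaluations of the quadratic form at y
    have hdot_u : ∀ i, ⇑(b i) ⬝ᵥ (M *ᵥ y) = ev i * co i := by
      intro i
      rw [Matrix.dotProduct_mulVec, ← Matrix.mulVec_transpose, hMt, heig i,
        smul_dotProduct, smul_eq_mul, hco]
    have hQ2 : y ⬝ᵥ (M *ᵥ y) = ∑ i, ev i * co i ^ 2 := by
      nth_rewrite 1 [hexp]
      rw [sum_dotProduct_aux]
      refine Finset.sum_congr rfl (fun i _ => ?_)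
      rw [smul_dotProduct, smul_eq_mul, hdot_u]
      ring
    have hS2 : ∑ a, y a ^ 2 = ∑ i, co i ^ 2 := by
      have hyy : y ⬝ᵥ y = ∑ i, co i ^ 2 := by
        nth_rewrite 1 [hexp]
        rw [sum_dotProduct_aux]
        refine Finset.sum_congr rfl (fun i _ => ?_)
        rw [smul_dotProduct, smul_eq_mul]
        have : ⇑(b i) ⬝ᵥ y = co i := by rw [hco]
        rw [this]; ring
      rw [← hyy]
      simp only [dotProduct, pow_two]
    have hQ1 : y ⬝ᵥ (M *ᵥ y) = d i0 * v i1 ^ 2 + d i1 * v i0 ^ 2 := by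
      rw [hquad, hPfix y hvy, hQy]
    -- kernel vectors are multiples of v, hence orthogonal to y
    have hker : ∀ i, ev i = 0 → co i = 0 := by
      intro i h0
      have hMu : M *ᵥ ⇑(b i) = 0 := by rw [heig i, h0, zero_smul]
      have hz : ∑ a, d a * (P *ᵥ ⇑(b i)) a ^ 2 = 0 := by
        rw [← hquad, hMu, dotProduct_zero]
      have hPz : P *ᵥ ⇑(b i) = 0 := by
        funext a
        have hnn : ∀ a ∈ Finset.univ, (0:ℝ) ≤ d a * (P *ᵥ ⇑(b i)) a ^ 2 := by
          intro a _; have := hdpos a; positivity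
        have h4 := (Finset.sum_eq_zero_iff_of_nonneg hnn).mp hz a (Finset.mem_univ a)
        have hda := hdpos a
        have hsq : (P *ᵥ ⇑(b i)) a ^ 2 = 0 := by nlinarith [sq_nonneg ((P *ᵥ ⇑(b i)) a)]
        have := pow_eq_zero_iff (n := 2) (by norm_num) |>.mp hsq
        simpa using this
      have huv : (⇑(b i) : Fin D → ℝ) = (c⁻¹ * (v ⬝ᵥ ⇑(b i))) • v := by
        have h5 := hPvec ⇑(b i)
        rw [hPz] at h5
        exact sub_eq_zero.mp h5.symm
      have : co i = (c⁻¹ * (v ⬝ᵥ ⇑(b i))) • v ⬝ᵥ y := by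
        rw [hco]; simp only [← huv]
      rw [this, smul_dotProduct, hvy, smul_zero]
    -- assemble the contradiction
    have hterm : ∀ i ∈ Finset.univ, d i1 * co i ^ 2 ≤ ev i * co i ^ 2 := by
      intro i _
      by_cases h0 : ev i = 0
      · rw [hker i h0, h0]; ring_nf; rfl
      · have hlt := hcon (ev i) ⇑(b i) (hune i) (heig i) h0
        nlinarith [sq_nonneg (co i)]
    have hex : ∃ j, co j ≠ 0 := by
      by_contra hco0; push_neg at hco0
      rw [hS2] at hSypos
      have : ∑ i, co i ^ 2 = 0 := Finset.sum_eq_zero fun i _ => by rw [hco0 i]; ring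
      linarith
    obtain ⟨j, hj⟩ := hex
    have hevj : ev j ≠ 0 := fun h => hj (hker j h)
    have hjlt : d i1 * co j ^ 2 < ev j * co j ^ 2 := by
      have hlt := hcon (ev j) ⇑(b j) (hune j) (heig j) hevj
      have hcj : 0 < co j ^ 2 := by positivity
      nlinarith
    have hstrict : d i1 * ∑ i, co i ^ 2 < ∑ i, ev i * co i ^ 2 := by
      rw [Finset.mul_sum]
      exact Finset.sum_lt_sum hterm ⟨j, Finset.mem_univ j, hjlt⟩
    have hupper : (∑ i, ev i * co i ^ 2) ≤ d i1 * ∑ i, co i ^ 2 := by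
      rw [← hQ2, hQ1, ← hS2, hSy]
      have hd01 : d i0 ≤ d i1 := hdmono i0 i1 (by rw [hi0, hi1]; exact Fin.mk_le_mk.mpr (by norm_num))
      nlinarith [sq_nonneg (v i1), sq_nonneg (v i0)]
    linarith
end

section
/- Let $\sigma$ be a full-rank density matrix on $\mathbb{C}^D$ with spectral decomposition $\sigma = \sum_\alpha \lambda_\alpha |\alpha\rangle\langle\alpha|$, and let $\mu$ be the largest eigenvalue of $\tilde{S} = \mathrm{diag}(\lambda) - \lambda\lambda^T$. Set $p = 1/(1+\mu)$. Then for every traceless Hermitian matrix $X$ with $\mathrm{Tr}[X^2] = 1$, we have $(1-p)\sum_{\alpha} \frac{|X_{\alpha\alpha}|^2}{\lambda_\alpha} + p\left(\sum_{\alpha\ne\beta} |X_{\alpha\beta}|^2 + \left|\sum_\alpha X_{\alpha\alpha}\right|^2\right) \ge p$, where matrix entries are taken in the eigenbasis of $\sigma$. -/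
open Matrix

private lemma unitary_dot_preserve {D : ℕ} (U : Matrix (Fin D) (Fin D) ℝ)
    (hU : star U * U = 1) (x y : Fin D → ℝ) :
    dotProduct (U.mulVec x) (U.mulVec y) = dotProduct x y := by
  rw [Matrix.dotProduct_mulVec, Matrix.vecMul_mulVec]
  have h : Uᵀ * U = 1 := by
    simpa [Matrix.star_eq_conjTranspose, Matrix.conjTranspose_eq_transpose_of_trivial] using hU
  rw [h, Matrix.vecMul_one]

private lemma quad_bound {D : ℕ} (S : Matrix (Fin D) (Fin D) ℝ) (hS : S.IsHermitian) (μ : ℝ)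
    (h0 : ∀ i, 0 ≤ hS.eigenvalues i) (h1 : ∀ i, hS.eigenvalues i ≤ μ) (z : Fin D → ℝ) :
    dotProduct (S.mulVec z) (S.mulVec z) ≤ μ * dotProduct z (S.mulVec z) := by
  classical
  set U : Matrix (Fin D) (Fin D) ℝ := (hS.eigenvectorUnitary : Matrix (Fin D) (Fin D) ℝ) with hUdef
  set t := hS.eigenvalues with htdef
  have hspec : S = U * Matrix.diagonal t * star U := by simpa using hS.spectral_theorem
  have hU1 : star U * U = 1 := by
    have := hS.eigenvectorUnitary.2
    rw [Matrix.mem_unitaryGroup_iff'] at this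
    exact this
  have hU2 : U * star U = 1 := by
    have := hS.eigenvectorUnitary.2
    rw [Matrix.mem_unitaryGroup_iff] at this
    exact this
  set w := (star U).mulVec z with hw
  have hzw : z = U.mulVec w := by
    rw [hw, Matrix.mulVec_mulVec, hU2, Matrix.one_mulVec]
  have hSz : S.mulVec z = U.mulVec ((Matrix.diagonal t).mulVec w) := by
    rw [hspec, ← Matrix.mulVec_mulVec, ← Matrix.mulVec_mulVec]
  have e1 : dotProduct (S.mulVec z) (S.mulVec z) = ∑ i, t i ^ 2 * w i ^ 2 := by
    rw [hSz, unitary_dot_preserve U hU1]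
    simp only [dotProduct, Matrix.mulVec_diagonal]
    apply Finset.sum_congr rfl; intro i _; ring
  have e2 : dotProduct z (S.mulVec z) = ∑ i, t i * w i ^ 2 := by
    rw [hSz, hzw, unitary_dot_preserve U hU1]
    simp only [dotProduct, Matrix.mulVec_diagonal]
    apply Finset.sum_congr rfl; intro i _; ring
  rw [e1, e2, Finset.mul_sum]
  apply Finset.sum_le_sum
  intro i _
  have hh := mul_nonneg (sub_nonneg.2 (h1 i)) (mul_nonneg (h0 i) (sq_nonneg (w i)))
  nlinarith [hh]

/-- Lower bound on the chi-squared quadratic form: with `λ` the (strictly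
positive) eigenvalue vector of the state, `μ` the largest eigenvalue of
`S̃ = diag(λ) - λλᵀ` and `p = 1/(1+μ)`, every traceless Hermitian `X` with
`Tr[X²] = 1` (entries taken in the eigenbasis of `σ`) satisfies
`(1-p) ∑ |X_αα|²/λ_α + p (∑_{α≠β} |X_αβ|² + |∑_α X_αα|²) ≥ p`. -/
theorem quadratic_form_lower_bound (D : ℕ) (lam : Fin D → ℝ)
    (hpos : ∀ a, 0 < lam a) (hsum : ∑ a, lam a = 1)
    (S : Matrix (Fin D) (Fin D) ℝ)
    (hS : S = Matrix.diagonal lam - Matrix.vecMulVec lam lam)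
    (μ : ℝ)
    (hμev : ∃ x : Fin D → ℝ, x ≠ 0 ∧ S.mulVec x = μ • x)
    (hμmax : ∀ (ν : ℝ) (x : Fin D → ℝ), x ≠ 0 → S.mulVec x = ν • x → ν ≤ μ)
    (p : ℝ) (hp : p = 1 / (1 + μ))
    (X : Matrix (Fin D) (Fin D) ℂ) (hX : X.IsHermitian)
    (hXtr : X.trace = 0) (hXnorm : (X * X).trace = 1) :
    (1 - p) * (∑ a, Complex.normSq (X a a) / lam a)
        + p * ((∑ a, ∑ b ∈ Finset.univ.erase a, Complex.normSq (X a b))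
            + Complex.normSq (∑ a, X a a))
      ≥ p := by
  classical
  -- diagonal entries are real
  set d : Fin D → ℝ := fun a => (X a a).re with hd
  have hdiag : ∀ a, X a a = (d a : ℂ) := by
    intro a
    have hst : (starRingEnd ℂ) (X a a) = X a a := congrFun (congrFun hX a) a
    exact (Complex.conj_eq_iff_re.mp hst).symm
  -- sum of diagonal is zero
  have hdsum : ∑ a, d a = 0 := by
    have : (X.trace).re = 0 := by rw [hXtr]; simp
    rw [Matrix.trace] at this
    simpa [Matrix.diag, Complex.re_sum, hd] using this
  -- trace term vanishes
  have htr0 : Complex.normSq (∑ a, X a a) = 0 := by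
    have : (∑ a, X a a) = 0 := by
      rw [← hXtr]; rfl
    rw [this]; simp
  -- normSq of diagonal entries
  have hnsq : ∀ a, Complex.normSq (X a a) = d a ^ 2 := by
    intro a; rw [hdiag a]; simp [Complex.normSq, sq]
  -- total Frobenius norm
  have htot : ∑ a, ∑ b, Complex.normSq (X a b) = 1 := by
    have h1 : ((X * X).trace).re = 1 := by rw [hXnorm]; simp
    rw [Matrix.trace] at h1
    have h2 : ∀ a, (X * X).diag a = ∑ b, (Complex.normSq (X a b) : ℂ) := by
      intro a
      simp only [Matrix.diag, Matrix.mul_apply]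
      apply Finset.sum_congr rfl
      intro b _
      have hba : X b a = (starRingEnd ℂ) (X a b) := by
        have := congrFun (congrFun hX b) a
        simp only [Matrix.conjTranspose_apply] at this
        exact this.symm
      rw [hba, Complex.mul_conj]
    calc ∑ a, ∑ b, Complex.normSq (X a b)
        = (∑ a, ∑ b, (Complex.normSq (X a b) : ℂ)).re := by
          simp [Complex.re_sum]
      _ = 1 := by
          rw [← Finset.sum_congr rfl (fun a _ => h2 a)]
          exact h1
  -- off-diagonal sum
  have hoff : (∑ a, ∑ b ∈ Finset.univ.erase a, Complex.normSq (X a b))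
      = 1 - ∑ a, d a ^ 2 := by
    have : ∀ a, ∑ b ∈ Finset.univ.erase a, Complex.normSq (X a b)
        = (∑ b, Complex.normSq (X a b)) - d a ^ 2 := by
      intro a
      rw [← hnsq a, Finset.sum_erase_eq_sub (Finset.mem_univ a)]
    rw [Finset.sum_congr rfl (fun a _ => this a), Finset.sum_sub_distrib, htot]
  -- S is hermitian
  have hSherm : S.IsHermitian := by
    rw [hS]
    apply Matrix.IsHermitian.sub
    · apply Matrix.isHermitian_diagonal
    · ext i j
      simp [Matrix.conjTranspose_apply, Matrix.vecMulVec_apply, mul_comm]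
  -- PSD: quadratic form nonneg
  have hPSD : ∀ y : Fin D → ℝ, 0 ≤ dotProduct y (S.mulVec y) := by
    intro y
    have hform : dotProduct y (S.mulVec y)
        = (∑ a, lam a * y a ^ 2) - (∑ a, lam a * y a) ^ 2 := by
      rw [hS, Matrix.sub_mulVec, dotProduct_sub]
      congr 1
      · simp only [Matrix.mulVec_diagonal, dotProduct]
        exact Finset.sum_congr rfl fun a _ => by ring
      · have hmain : ∀ a, y a * (∑ b, lam a * lam b * y b)
            = (lam a * y a) * ∑ b, lam b * y b := by
          intro a
          rw [Finset.mul_sum, Finset.mul_sum]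
          exact Finset.sum_congr rfl fun b _ => by ring
        simp only [Matrix.mulVec, dotProduct, Matrix.vecMulVec_apply]
        rw [Finset.sum_congr rfl fun a _ => hmain a, ← Finset.sum_mul, sq]
    rw [hform, sub_nonneg]
    have hcs := Finset.sum_mul_sq_le_sq_mul_sq Finset.univ
      (fun a => Real.sqrt (lam a)) (fun a => Real.sqrt (lam a) * y a)
    have e1 : ∀ a, Real.sqrt (lam a) * (Real.sqrt (lam a) * y a) = lam a * y a := by
      intro a
      rw [← mul_assoc, Real.mul_self_sqrt (hpos a).le]
    have e2 : ∀ a, Real.sqrt (lam a) ^ 2 = lam a := fun a => Real.sq_sqrt (hpos a).le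
    have e3 : ∀ a, (Real.sqrt (lam a) * y a) ^ 2 = lam a * y a ^ 2 := by
      intro a; rw [mul_pow, e2]
    calc (∑ a, lam a * y a) ^ 2
        = (∑ a, Real.sqrt (lam a) * (Real.sqrt (lam a) * y a)) ^ 2 := by
          rw [Finset.sum_congr rfl (fun a _ => (e1 a).symm)]
      _ ≤ (∑ a, Real.sqrt (lam a) ^ 2) * ∑ a, (Real.sqrt (lam a) * y a) ^ 2 := hcs
      _ = ∑ a, lam a * y a ^ 2 := by
          rw [Finset.sum_congr rfl (fun a _ => e2 a), hsum, one_mul,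
            Finset.sum_congr rfl (fun a _ => e3 a)]
  -- eigenvalues of S are in [0, μ]
  have hev0 : ∀ i, 0 ≤ hSherm.eigenvalues i := by
    intro i
    set v := ⇑(hSherm.eigenvectorBasis i) with hv
    have hne : v ≠ 0 := by
      intro h
      have : hSherm.eigenvectorBasis i = 0 := by
        apply PiLp.ext; intro j; exact congrFun h j
      exact hSherm.eigenvectorBasis.orthonormal.ne_zero i this
    have hev := hSherm.mulVec_eigenvectorBasis i
    have hq := hPSD v
    rw [hev] at hq
    have hvv : 0 < dotProduct v v := by
      rcases Function.ne_iff.mp hne with ⟨j, hj⟩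
      have hj' : v j ≠ 0 := by simpa using hj
      have : 0 < v j ^ 2 := sq_pos_iff.mpr hj'
      calc (0:ℝ) < v j ^ 2 := this
        _ ≤ ∑ k, v k * v k := by
          rw [sq]
          exact Finset.single_le_sum (fun k _ => mul_self_nonneg (v k)) (Finset.mem_univ j)
        _ = dotProduct v v := rfl
    have : dotProduct v (hSherm.eigenvalues i • v)
        = hSherm.eigenvalues i * dotProduct v v := by
      simp [dotProduct, Finset.mul_sum]
      apply Finset.sum_congr rfl; intro k _; ring
    rw [this] at hq
    nlinarith
  have hevμ : ∀ i, hSherm.eigenvalues i ≤ μ := by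
    intro i
    set v := ⇑(hSherm.eigenvectorBasis i) with hv
    have hne : v ≠ 0 := by
      intro h
      have : hSherm.eigenvectorBasis i = 0 := by
        apply PiLp.ext; intro j; exact congrFun h j
      exact hSherm.eigenvectorBasis.orthonormal.ne_zero i this
    exact hμmax _ v hne (hSherm.mulVec_eigenvectorBasis i)
  -- μ ≥ 0
  have hμ0 : 0 ≤ μ := by
    obtain ⟨x, hx0, hx⟩ := hμev
    have hq := hPSD x
    rw [hx] at hq
    have hvv : 0 < dotProduct x x := by
      rcases Function.ne_iff.mp hx0 with ⟨j, hj⟩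
      have hj' : x j ≠ 0 := by simpa using hj
      have : 0 < x j ^ 2 := sq_pos_iff.mpr hj'
      calc (0:ℝ) < x j ^ 2 := this
        _ ≤ ∑ k, x k * x k := by
          rw [sq]
          exact Finset.single_le_sum (fun k _ => mul_self_nonneg (x k)) (Finset.mem_univ j)
        _ = dotProduct x x := rfl
    have : dotProduct x (μ • x) = μ * dotProduct x x := by
      simp [dotProduct, Finset.mul_sum]
      apply Finset.sum_congr rfl; intro k _; ring
    rw [this] at hq
    nlinarith
  -- key inequality: ∑ d² ≤ μ ∑ d²/λ
  set z : Fin D → ℝ := fun a => d a / lam a with hz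
  have hlam : ∀ b, lam b * z b = d b := fun b => by
    show lam b * (d b / lam b) = d b
    rw [← mul_div_assoc, mul_comm, mul_div_assoc, div_self (hpos b).ne', mul_one]
  have hSz : S.mulVec z = d := by
    funext a
    rw [hS, Matrix.sub_mulVec, Pi.sub_apply, Matrix.mulVec_diagonal]
    have h2 : (Matrix.vecMulVec lam lam).mulVec z a = lam a * ∑ b, d b := by
      show ∑ b, Matrix.vecMulVec lam lam a b * z b = _
      rw [Finset.mul_sum]
      refine Finset.sum_congr rfl fun b _ => ?_
      rw [Matrix.vecMulVec_apply, mul_assoc, hlam b]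
    rw [h2, hdsum, mul_zero, sub_zero, hlam a]
  have hkey : ∑ a, d a ^ 2 ≤ μ * ∑ a, d a ^ 2 / lam a := by
    have hq := quad_bound S hSherm μ hev0 hevμ z
    rw [hSz] at hq
    have e1 : dotProduct d d = ∑ a, d a ^ 2 := by
      simp [dotProduct, sq]
    have e2 : dotProduct z d = ∑ a, d a ^ 2 / lam a := by
      simp only [dotProduct, hz]
      refine Finset.sum_congr rfl fun a _ => ?_
      rw [div_mul_eq_mul_div, ← sq]
    rwa [e1, e2] at hq
  -- finish
  have hμ1 : (0:ℝ) < 1 + μ := by linarith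
  have hpval : p = 1 / (1 + μ) := hp
  have hp0 : 0 < p := by rw [hpval]; exact div_pos one_pos hμ1
  have hp1 : p * (1 + μ) = 1 := by rw [hpval]; field_simp
  rw [htr0, hoff]
  rw [Finset.sum_congr rfl (fun a _ => by rw [hnsq a])]
  have hA : 0 ≤ ∑ a, d a ^ 2 / lam a := by
    exact Finset.sum_nonneg fun a _ => div_nonneg (sq_nonneg _) (hpos a).le
  nlinarith [hkey, hp0, hp1, hμ0, hA]
end

section
/- Let $\lambda_1,\dots,\lambda_D > 0$ with $\sum_\alpha\lambda_\alpha = 1$. The second smallest eigenvalue of $M = P_s\,\mathrm{diag}(1/(1+\lambda_\alpha))\,P_s$ (where $P_s$ projects orthogonally to the vector with components $\sqrt{\lambda_\alpha/(1+\lambda_\alpha)}$) equals $1/(1+\mu)$, where $\mu$ is the largest eigenvalue of $\tilde{S} = \mathrm{diag}(\lambda) - \lambda\lambda^T$. -/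
open Matrix

lemma vecMulVec_mulVec' {n : ℕ} (w u x : Fin n → ℝ) :
    (Matrix.vecMulVec w u).mulVec x = (u ⬝ᵥ x) • w := by
  funext i
  simp only [Matrix.mulVec, dotProduct, Matrix.vecMulVec_apply, Pi.smul_apply,
    smul_eq_mul, Finset.sum_mul]
  exact Finset.sum_congr rfl fun j _ => by ring

/-- The second smallest (smallest nonzero) eigenvalue of
`M = P_s diag(1/(1+λ)) P_s` equals `1/(1+μ)` where `μ` is the largest
eigenvalue of `S̃ = diag(λ) - λλᵀ`. -/
theorem second_eigenvalue_eq_rate (D : ℕ) (lam : Fin D → ℝ)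
    (hpos : ∀ a, 0 < lam a) (hsum : ∑ a, lam a = 1)
    (v : Fin D → ℝ) (hv : v = fun a => Real.sqrt (lam a / (1 + lam a)))
    (P M : Matrix (Fin D) (Fin D) ℝ)
    (hP : P = 1 - (∑ a, v a ^ 2)⁻¹ • Matrix.vecMulVec v v)
    (hM : M = P * Matrix.diagonal (fun a => 1 / (1 + lam a)) * P)
    (m : ℝ) (hm0 : m ≠ 0)
    (hmev : ∃ x : Fin D → ℝ, x ≠ 0 ∧ M.mulVec x = m • x)
    (hmmin : ∀ (ν : ℝ) (x : Fin D → ℝ), x ≠ 0 → M.mulVec x = ν • x →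
        ν = 0 ∨ m ≤ ν)
    (S : Matrix (Fin D) (Fin D) ℝ)
    (hS : S = Matrix.diagonal lam - Matrix.vecMulVec lam lam)
    (μ : ℝ)
    (hμev : ∃ x : Fin D → ℝ, x ≠ 0 ∧ S.mulVec x = μ • x)
    (hμmax : ∀ (ν : ℝ) (x : Fin D → ℝ), x ≠ 0 → S.mulVec x = ν • x → ν ≤ μ) :
    m = 1 / (1 + μ) := by
  classical
  have hl1 : ∀ a, (0:ℝ) < 1 + lam a := fun a => by have := hpos a; linarith
  have hv2 : ∀ a, v a ^ 2 = lam a / (1 + lam a) := by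
    intro a; rw [hv]
    exact Real.sq_sqrt (div_nonneg (hpos a).le (hl1 a).le)
  have hvpos : ∀ a, 0 < v a := by
    intro a; rw [hv]
    exact Real.sqrt_pos.mpr (div_pos (hpos a) (hl1 a))
  have hv2l : ∀ a, v a ^ 2 * (1 + lam a) = lam a := by
    intro a; rw [hv2, div_mul_cancel₀ _ (hl1 a).ne']
  obtain ⟨x₀, hx₀ne, hx₀⟩ := hmev
  have hne : Nonempty (Fin D) := by
    by_contra h
    exact hx₀ne (funext fun a => absurd ⟨a⟩ h)
  set c := ∑ a, v a ^ 2 with hc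
  have hcpos : 0 < c := Finset.sum_pos (fun a _ => pow_pos (hvpos a) 2)
    Finset.univ_nonempty
  have hvv : v ⬝ᵥ v = c := by
    simp [dotProduct, hc, sq]
  have hPmul : ∀ w : Fin D → ℝ, P.mulVec w = w - (c⁻¹ * (v ⬝ᵥ w)) • v := by
    intro w
    rw [hP, Matrix.sub_mulVec, Matrix.one_mulVec, Matrix.smul_mulVec,
      vecMulVec_mulVec', smul_smul]
  have hPv : P.mulVec v = 0 := by
    rw [hPmul, hvv, inv_mul_cancel₀ hcpos.ne', one_smul, sub_self]
  have hPfix : ∀ x : Fin D → ℝ, v ⬝ᵥ x = 0 → P.mulVec x = x := by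
    intro x hx; rw [hPmul, hx, mul_zero, zero_smul, sub_zero]
  -- key lemma producing eigenvectors of M
  have eigL : ∀ (x : Fin D → ℝ) (ν t : ℝ), v ⬝ᵥ x = 0 →
      (∀ a, x a / (1 + lam a) = ν * x a + t * v a) → M.mulVec x = ν • x := by
    intro x ν t hvx heq
    have hD : (Matrix.diagonal (fun a => 1 / (1 + lam a))).mulVec x = ν • x + t • v := by
      funext a
      rw [Matrix.mulVec_diagonal]
      have h := heq a
      simp only [Pi.add_apply, Pi.smul_apply, smul_eq_mul]
      linear_combination h
    rw [hM, ← Matrix.mulVec_mulVec, ← Matrix.mulVec_mulVec, hPfix x hvx, hD,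
      Matrix.mulVec_add, Matrix.mulVec_smul, Matrix.mulVec_smul, hPfix x hvx, hPv,
      smul_zero, add_zero]
  have hvM : ∀ w : Fin D → ℝ, v ⬝ᵥ M.mulVec w = 0 := by
    intro w
    rw [hM, ← Matrix.mulVec_mulVec, ← Matrix.mulVec_mulVec, hPmul,
      dotProduct_sub, dotProduct_smul, smul_eq_mul, hvv,
      mul_comm c⁻¹ _, mul_assoc, inv_mul_cancel₀ hcpos.ne', mul_one, sub_self]
  have hSmul : ∀ (y : Fin D → ℝ) (a : Fin D),
      S.mulVec y a = lam a * y a - (lam ⬝ᵥ y) * lam a := by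
    intro y a
    rw [hS, Matrix.sub_mulVec, Pi.sub_apply, Matrix.mulVec_diagonal,
      vecMulVec_mulVec', Pi.smul_apply, smul_eq_mul]
  -- analysis of the eigenpair (m, x₀)
  have hvx₀ : v ⬝ᵥ x₀ = 0 := by
    have h1 := hvM x₀
    rw [hx₀, dotProduct_smul, smul_eq_mul] at h1
    exact (mul_eq_zero.mp h1).resolve_left hm0
  set t := c⁻¹ * (v ⬝ᵥ (Matrix.diagonal (fun a => 1 / (1 + lam a))).mulVec x₀) with ht
  have hMx₀ : M.mulVec x₀ =
      (Matrix.diagonal (fun a => 1 / (1 + lam a))).mulVec x₀ - t • v := by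
    rw [hM, ← Matrix.mulVec_mulVec, ← Matrix.mulVec_mulVec, hPfix x₀ hvx₀, hPmul]
  have heig : ∀ a, x₀ a / (1 + lam a) = m * x₀ a + t * v a := by
    intro a
    have h1 : M.mulVec x₀ a = m * x₀ a := by rw [hx₀]; rfl
    rw [hMx₀] at h1
    simp only [Pi.sub_apply, Pi.smul_apply, smul_eq_mul, Matrix.mulVec_diagonal] at h1
    linear_combination h1
  obtain ⟨a₀, ha₀⟩ : ∃ a, x₀ a ≠ 0 := by
    by_contra h; push_neg at h; exact hx₀ne (funext h)
  have hXpos : 0 < ∑ a, x₀ a ^ 2 :=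
    Finset.sum_pos' (fun a _ => sq_nonneg _)
      ⟨a₀, Finset.mem_univ _, by positivity⟩
  have hYpos : 0 < ∑ a, x₀ a ^ 2 / (1 + lam a) :=
    Finset.sum_pos' (fun a _ => by have := hl1 a; positivity)
      ⟨a₀, Finset.mem_univ _, by have := hl1 a₀; positivity⟩
  have hXY : m * (∑ a, x₀ a ^ 2) = ∑ a, x₀ a ^ 2 / (1 + lam a) := by
    have hx0v : x₀ ⬝ᵥ v = 0 := by rw [dotProduct_comm]; exact hvx₀
    have h1 : x₀ ⬝ᵥ M.mulVec x₀ = ∑ a, x₀ a ^ 2 / (1 + lam a) := by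
      rw [hMx₀, dotProduct_sub, dotProduct_smul, smul_eq_mul, hx0v,
        mul_zero, sub_zero]
      simp only [dotProduct, Matrix.mulVec_diagonal]
      exact Finset.sum_congr rfl fun a _ => by ring
    have h2 : x₀ ⬝ᵥ M.mulVec x₀ = m * ∑ a, x₀ a ^ 2 := by
      rw [hx₀, dotProduct_smul, smul_eq_mul]
      congr 1
      simp [dotProduct, sq]
    linarith [h1, h2]
  have hYX : ∑ a, x₀ a ^ 2 / (1 + lam a) < ∑ a, x₀ a ^ 2 := by
    apply Finset.sum_lt_sum
      (fun a _ => div_le_self (sq_nonneg _) (by linarith [hpos a]))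
    exact ⟨a₀, Finset.mem_univ _,
      div_lt_self (by positivity) (by linarith [hpos a₀])⟩
  have hm_pos : 0 < m := by nlinarith
  have hm_lt : m < 1 := by nlinarith
  set μ' := (1 - m) / m with hμ'
  have hmμ'2 : m * μ' = 1 - m := by rw [hμ']; field_simp
  have hμ'pos : 0 < μ' := div_pos (by linarith) hm_pos
  have heig2 : ∀ a, x₀ a * (m * (μ' - lam a)) = t * v a * (1 + lam a) := by
    intro a
    have h := heig a
    have h' : x₀ a = (m * x₀ a + t * v a) * (1 + lam a) := by
      rw [← h, div_mul_cancel₀ _ (hl1 a).ne']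
    linear_combination x₀ a * hmμ'2 + h'
  -- construct an eigenvector of S with eigenvalue μ'
  have hBev : ∃ y : Fin D → ℝ, y ≠ 0 ∧ S.mulVec y = μ' • y := by
    by_cases htz : t = 0
    · have hx0μ : ∀ a, x₀ a * (μ' - lam a) = 0 := by
        intro a
        have h := heig2 a
        rw [htz, zero_mul, zero_mul] at h
        rcases mul_eq_zero.mp h with h1 | h1
        · rw [h1, zero_mul]
        · rcases mul_eq_zero.mp h1 with h2 | h2
          · exact absurd h2 hm0
          · rw [h2, mul_zero]
      refine ⟨fun a => v a * x₀ a, ?_, ?_⟩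
      · intro h
        have h1 := congrFun h a₀
        simp only [Pi.zero_apply] at h1
        exact ha₀ ((mul_eq_zero.mp h1).resolve_left (hvpos a₀).ne')
      · have hsum0 : lam ⬝ᵥ (fun a => v a * x₀ a) = 0 := by
          have h1 : lam ⬝ᵥ (fun a => v a * x₀ a) = μ' * (v ⬝ᵥ x₀) := by
            simp only [dotProduct, Finset.mul_sum]
            refine Finset.sum_congr rfl fun a _ => ?_
            linear_combination (-(v a)) * hx0μ a
          rw [h1, hvx₀, mul_zero]
        funext a
        rw [hSmul, hsum0, zero_mul, sub_zero, Pi.smul_apply, smul_eq_mul]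
        linear_combination (-(v a)) * hx0μ a
    · have hμ'ne : ∀ a, μ' - lam a ≠ 0 := by
        intro a h
        have h2 := heig2 a
        rw [h, mul_zero, mul_zero] at h2
        exact (mul_ne_zero (mul_ne_zero htz (hvpos a).ne') (hl1 a).ne') h2.symm
      have hlμ'ne : ∀ a, lam a - μ' ≠ 0 := fun a =>
        sub_ne_zero.mpr (Ne.symm (sub_ne_zero.mp (hμ'ne a)))
      have hsec : ∑ a, lam a / (μ' - lam a) = 0 := by
        have h1 : v ⬝ᵥ x₀ = (t / m) * ∑ a, lam a / (μ' - lam a) := by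
          simp only [dotProduct, Finset.mul_sum]
          refine Finset.sum_congr rfl fun a _ => ?_
          rw [div_mul_div_comm, eq_div_iff (mul_ne_zero hm0 (hμ'ne a))]
          linear_combination v a * heig2 a + t * hv2l a
        rw [hvx₀] at h1
        exact ((mul_eq_zero.mp h1.symm).resolve_left (div_ne_zero htz hm0))
      have hs1 : lam ⬝ᵥ (fun a => lam a / (lam a - μ')) = 1 := by
        show ∑ a, lam a * (lam a / (lam a - μ')) = 1
        have hterm : ∀ a ∈ Finset.univ, lam a * (lam a / (lam a - μ')) =
            lam a - μ' * (lam a / (μ' - lam a)) := by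
          intro a _
          field_simp [hlμ'ne a, hμ'ne a]
          ring
        rw [Finset.sum_congr rfl hterm, Finset.sum_sub_distrib, hsum,
          ← Finset.mul_sum, hsec, mul_zero, sub_zero]
      refine ⟨fun a => lam a / (lam a - μ'), ?_, ?_⟩
      · intro h
        obtain ⟨b⟩ := hne
        have h1 := congrFun h b
        simp only [Pi.zero_apply] at h1
        rcases div_eq_zero_iff.mp h1 with h4 | h4
        · exact (hpos b).ne' h4
        · exact hlμ'ne b h4
      · funext a
        rw [hSmul, hs1, one_mul, Pi.smul_apply, smul_eq_mul]
        field_simp [hlμ'ne a]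
        ring
  have hμ'le : μ' ≤ μ := by
    obtain ⟨y, hyne, hy⟩ := hBev
    exact hμmax μ' y hyne hy
  have hμpos : 0 < μ := lt_of_lt_of_le hμ'pos hμ'le
  have h1μ : (0:ℝ) < 1 + μ := by linarith
  -- construct an eigenvector of M with eigenvalue 1/(1+μ)
  obtain ⟨y, hyne, hy⟩ := hμev
  have heigS : ∀ a, y a * (lam a - μ) = lam a * (lam ⬝ᵥ y) := by
    intro a
    have h := congrFun hy a
    rw [hSmul] at h
    simp only [Pi.smul_apply, smul_eq_mul] at h
    linear_combination h
  obtain ⟨b, hb⟩ : ∃ b, y b ≠ 0 := by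
    by_contra h; push_neg at h; exact hyne (funext h)
  have hAex : ∃ x : Fin D → ℝ, x ≠ 0 ∧ M.mulVec x = (1/(1+μ)) • x := by
    by_cases hcase : ∃ cI, lam cI = μ
    · obtain ⟨cI, hcI⟩ := hcase
      have hs0 : lam ⬝ᵥ y = 0 := by
        have h := heigS cI
        rw [hcI, sub_self, mul_zero] at h
        exact (mul_eq_zero.mp h.symm).resolve_left hμpos.ne'
      have hy0 : ∀ a, y a * (lam a - μ) = 0 := fun a => by
        rw [heigS a, hs0, mul_zero]
      have hlb : lam b = μ := by
        rcases mul_eq_zero.mp (hy0 b) with h | h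
        · exact absurd h hb
        · exact sub_eq_zero.mp h
      refine ⟨fun a => if lam a = μ then y a / v a else 0, ?_, ?_⟩
      · intro h
        have h1 := congrFun h b
        rw [if_pos hlb] at h1
        simp only [Pi.zero_apply] at h1
        exact hb ((div_eq_zero_iff.mp h1).resolve_right (hvpos b).ne')
      · apply eigL _ _ 0
        · have h1 : v ⬝ᵥ (fun a => if lam a = μ then y a / v a else 0)
              = ∑ a, (if lam a = μ then y a else 0) := by
            simp only [dotProduct]
            refine Finset.sum_congr rfl fun a _ => ?_
            by_cases h : lam a = μ
            · rw [if_pos h, if_pos h, mul_div_cancel₀ _ (hvpos a).ne']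
            · rw [if_neg h, if_neg h, mul_zero]
          have h2 : ∑ a, μ * (if lam a = μ then y a else 0) = lam ⬝ᵥ y := by
            simp only [dotProduct]
            refine Finset.sum_congr rfl fun a _ => ?_
            by_cases h : lam a = μ
            · rw [if_pos h, h]
            · rw [if_neg h, mul_zero,
                (mul_eq_zero.mp (hy0 a)).resolve_right (sub_ne_zero.mpr h), mul_zero]
          have h3 : μ * ∑ a, (if lam a = μ then y a else 0) = 0 := by
            rw [Finset.mul_sum, h2, hs0]
          rw [h1]
          exact (mul_eq_zero.mp h3).resolve_left hμpos.ne'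
        · intro a
          by_cases h : lam a = μ
          · simp only [if_pos h, h]
            ring
          · simp only [if_neg h, zero_mul, mul_zero, zero_div, add_zero, zero_add]
    · push_neg at hcase
      have hμne : ∀ a, μ - lam a ≠ 0 := fun a =>
        sub_ne_zero.mpr (fun h => hcase a h.symm)
      have hlμne : ∀ a, lam a - μ ≠ 0 := fun a => sub_ne_zero.mpr (hcase a)
      have hsne : lam ⬝ᵥ y ≠ 0 := by
        intro h0
        apply hyne
        funext a
        have h := heigS a
        rw [h0, mul_zero] at h
        exact (mul_eq_zero.mp h).resolve_right (hlμne a)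
      have h2 : ∑ a, lam a * lam a / (lam a - μ) = 1 := by
        have hdot : lam ⬝ᵥ y = ∑ a, lam a * y a := rfl
        have h1 : ∑ a, lam a * y a
            = (lam ⬝ᵥ y) * ∑ a, lam a * lam a / (lam a - μ) := by
          rw [Finset.mul_sum]
          refine Finset.sum_congr rfl fun a _ => ?_
          have hya : y a = lam a * (lam ⬝ᵥ y) / (lam a - μ) := by
            rw [eq_div_iff (hlμne a)]
            linear_combination heigS a
          rw [hya]
          field_simp
        rw [← hdot] at h1
        have h2' : (lam ⬝ᵥ y) * 1 = (lam ⬝ᵥ y) * ∑ a, lam a * lam a / (lam a - μ) := by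
          rw [mul_one]; exact h1
        exact (mul_left_cancel₀ hsne h2').symm
      have hsec2 : ∑ a, lam a / (μ - lam a) = 0 := by
        have h3 : ∀ a ∈ Finset.univ, lam a / (μ - lam a)
            = (lam a - lam a * lam a / (lam a - μ)) / μ := by
          intro a _
          field_simp [hμne a, hlμne a]
          ring
        rw [Finset.sum_congr rfl h3, ← Finset.sum_div, Finset.sum_sub_distrib,
          hsum, h2, sub_self, zero_div]
      refine ⟨fun a => v a * (1 + lam a) / (μ - lam a), ?_, ?_⟩
      · intro h
        obtain ⟨b'⟩ := hne
        have h1 := congrFun h b'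
        simp only [Pi.zero_apply] at h1
        rcases div_eq_zero_iff.mp h1 with h4 | h4
        · rcases mul_eq_zero.mp h4 with h5 | h5
          · exact (hvpos b').ne' h5
          · exact (hl1 b').ne' h5
        · exact hμne b' h4
      · apply eigL _ _ (1/(1+μ))
        · have h1 : v ⬝ᵥ (fun a => v a * (1 + lam a) / (μ - lam a))
              = ∑ a, lam a / (μ - lam a) := by
            simp only [dotProduct]
            refine Finset.sum_congr rfl fun a _ => ?_
            have h3 := hv2l a
            field_simp [hμne a]
            linear_combination h3
          rw [h1, hsec2]
        · intro a
          field_simp [hμne a, (hl1 a).ne', h1μ.ne']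
          ring
  obtain ⟨x₁, hx₁ne, hx₁⟩ := hAex
  have hν : (1:ℝ)/(1+μ) ≠ 0 := one_div_ne_zero h1μ.ne'
  have hmle : m ≤ 1/(1+μ) := (hmmin _ _ hx₁ne hx₁).resolve_left hν
  have hge : 1/(1+μ) ≤ m := by
    rw [div_le_iff₀ h1μ]
    nlinarith [mul_le_mul_of_nonneg_left hμ'le hm_pos.le, hmμ'2]
  linarith
end
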